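/- arXiv:1504.00219 — 14 statements merged into one kernel-verified Lean document; each statement's English description precedes it below -/
import Mathlib

section
/- The direct product ℤ × ℤ (as an additive semigroup) does not belong to Tak(𝒮). Concretely, writing a = (1,0) and b = (0,1), and letting S_n be the additive subsemigroup of ℤ × ℤ generated by the two elements −2a and (2n−1)a + b, the chain S_1 ⊆ S_2 ⊆ S_3 ⊆ ⋯ is an ascending chain of subsemigroups, each of rank at most 2, in which every inclusion is strict; in particular the chain is not stationary. -/
/-!
Every element `(x, y)` of `S n` satisfies `y ≥ 0` and `x ≤ (2n+1) y`, since both generators do and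
these inequalities are preserved by addition. The generator `(2n+3, 1)` of `S (n+1)` violates them, so
the inclusions `S n ≤ S (n+1)`, which hold because `(2n+1, 1) = (2n+3, 1) + (-2, 0)`, are strict.
-/

namespace AddSubsemigroup

variable {M : Type*} [AddSemigroup M]

theorem closure_pair_le_closure_pair {u v w : M} (h : w + u = v) :
    closure {u, v} ≤ closure {u, w} := by
  have hu : u ∈ closure {u, w} := subset_closure (Set.mem_insert _ _)
  have hw : w ∈ closure {u, w} := subset_closure (Set.mem_insert_of_mem _ rfl)
  rw [closure_le, Set.insert_subset_iff, Set.singleton_subset_iff, ← h]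
  exact ⟨hu, add_mem hw hu⟩

theorem exists_finset_card_le_two_closure_eq [DecidableEq M] (u v : M) :
    ∃ A : Finset M, A.card ≤ 2 ∧ closure (A : Set M) = closure {u, v} :=
  ⟨{u, v}, Finset.card_le_two, by rw [Finset.coe_pair]⟩

end AddSubsemigroup

def lowerCone (c : ℤ) : AddSubsemigroup (ℤ × ℤ) where
  carrier := {p | 0 ≤ p.2 ∧ p.1 ≤ c * p.2}
  add_mem' := by
    rintro ⟨x₁, y₁⟩ ⟨x₂, y₂⟩ ⟨hy₁, hx₁⟩ ⟨hy₂, hx₂⟩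
    exact ⟨add_nonneg hy₁ hy₂, by simp only [Prod.mk_add_mk]; linarith [mul_add c y₁ y₂]⟩

theorem mem_lowerCone {c : ℤ} {p : ℤ × ℤ} : p ∈ lowerCone c ↔ 0 ≤ p.2 ∧ p.1 ≤ c * p.2 :=
  Iff.rfl

theorem closure_le_lowerCone (c : ℤ) :
    AddSubsemigroup.closure {((-2 : ℤ), (0 : ℤ)), (c, 1)} ≤ lowerCone c := by
  rw [AddSubsemigroup.closure_le, Set.insert_subset_iff, Set.singleton_subset_iff,
    SetLike.mem_coe, SetLike.mem_coe, mem_lowerCone, mem_lowerCone]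
  constructor <;> simp

/-- ℤ × ℤ is not in Tak(𝒮): with a = (1,0), b = (0,1) and
`S n` the additive subsemigroup generated by `-2 • a` and `(2(n+1)-1) • a + b`
(so `S n` is the paper's `S_{n+1}`), the chain `S 0 ⊆ S 1 ⊆ ⋯` is ascending,
each term has rank at most 2, every inclusion is strict, and the chain is not
stationary. -/
theorem stmt_0 :
    let a : ℤ × ℤ := (1, 0)
    let b : ℤ × ℤ := (0, 1)
    let S : ℕ → AddSubsemigroup (ℤ × ℤ) := fun n =>
      AddSubsemigroup.closure {(-2 : ℤ) • a, (2 * (n : ℤ) + 1) • a + b}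
    (∀ n, S n ≤ S (n + 1)) ∧
    (∀ n, ∃ A : Finset (ℤ × ℤ), A.card ≤ 2 ∧
      AddSubsemigroup.closure (A : Set (ℤ × ℤ)) = S n) ∧
    (∀ n, S n ≠ S (n + 1)) ∧
    ¬ ∃ p, ∀ n, p ≤ n → S n = S p := by
  intro a b S
  have hS : ∀ n : ℕ, S n = AddSubsemigroup.closure {(-2, 0), (2 * (n : ℤ) + 1, 1)} := by
    intro n
    simp [S, a, b]
  have hasc : ∀ n, S n ≤ S (n + 1) := by
    intro n
    rw [hS, hS]
    exact AddSubsemigroup.closure_pair_le_closure_pair (by push_cast; ext <;> simp; ring)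
  have hstrict : ∀ n, S n ≠ S (n + 1) := by
    intro n h
    have hmem : ((2 * ((n + 1 : ℕ) : ℤ) + 1), (1 : ℤ)) ∈ S n := by
      rw [h, hS]
      exact AddSubsemigroup.subset_closure (Set.mem_insert_of_mem _ rfl)
    rw [hS] at hmem
    have := (closure_le_lowerCone _ hmem).2
    push_cast at this
    linarith
  refine ⟨hasc, fun n => AddSubsemigroup.exists_finset_card_le_two_closure_eq _ _, hstrict, ?_⟩
  rintro ⟨p, hp⟩
  exact hstrict p ((hp (p + 1) p.le_succ).trans (hp p le_rfl).symm).symm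
end

section
/- Let H be a nontrivial group and let G = ℤ ∗ H be the free product (coproduct in the category of groups) of ℤ and H. Then G, regarded as a semigroup, does not belong to Tak(𝒮). Concretely, writing a for the image in G of a generator of ℤ and choosing b in the image of H with b ≠ 1, and letting S_n be the subsemigroup of G generated by the two elements a^{−2} and a^{2n−1}b, the chain S_1 ⊆ S_2 ⊆ ⋯ is an ascending chain of subsemigroups of rank at most 2 in which every inclusion is strict. -/
/-!
Every element of `⟨a⁻², a^(2n+1) b⟩` can be written `a^e₁ b ⋯ a^eₖ b a^t` with all `eᵢ` odd
and `≤ 2n+1`, and `t` even and `≤ 0` (negative if `k = 0`): multiplying two such words only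
merges the last power of one with the first power of the next, and even plus odd is odd, hence
nonzero. In a free product, with `a` of infinite order and `b ≠ 1` in the other factor, this is
a reduced word whose first letter is `a^e` with `e ≤ 2n+1`, whereas the reduced word of
`a^(2n+3) b` starts with `a^(2n+3)`. On the other hand `a^(2n+1) b = a⁻² · a^(2n+3) b`, so the
chain is ascending.
-/

open Monoid
open scoped Monoid.Coprod

section AltProd

variable {G : Type*} [Group G]

def altProd (a b : G) (es : List ℤ) (t : ℤ) : G :=
  (es.map fun e => a ^ e * b).prod * a ^ t

variable (a b : G)

@[simp]
lemma altProd_nil (t : ℤ) : altProd a b [] t = a ^ t := by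
  simp [altProd]

@[simp]
lemma altProd_cons (e : ℤ) (es : List ℤ) (t : ℤ) :
    altProd a b (e :: es) t = a ^ e * b * altProd a b es t := by
  simp [altProd, mul_assoc]

lemma altProd_mul_nil (es : List ℤ) (t s : ℤ) :
    altProd a b es t * altProd a b [] s = altProd a b es (t + s) := by
  simp [altProd, mul_assoc, zpow_add]

lemma altProd_mul_cons (es : List ℤ) (t f : ℤ) (fs : List ℤ) (s : ℤ) :
    altProd a b es t * altProd a b (f :: fs) s = altProd a b (es ++ (t + f) :: fs) s := by
  simp [altProd, mul_assoc, zpow_add]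

end AltProd

def AdmissibleExponents (n : ℕ) (es : List ℤ) (t : ℤ) : Prop :=
  (∀ e ∈ es, Odd e ∧ e ≤ 2 * n + 1) ∧ Even t ∧ t ≤ 0 ∧ (es = [] → t < 0)

lemma AdmissibleExponents.headD_le {n : ℕ} {es : List ℤ} {t : ℤ}
    (h : AdmissibleExponents n es t) : es.headD t ≤ 2 * n + 1 := by
  cases es with
  | nil => have := h.2.2.2 rfl; simp; omega
  | cons e es => exact (h.1 e List.mem_cons_self).2

section Closure

variable {G : Type*} [Group G] (a b : G)

lemma exists_admissibleExponents_of_mem_closure {n : ℕ} {g : G}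
    (hg : g ∈ Subsemigroup.closure {a⁻¹ * a⁻¹, a ^ (2 * n + 1) * b}) :
    ∃ es t, AdmissibleExponents n es t ∧ g = altProd a b es t := by
  induction hg using Subsemigroup.closure_induction with
  | mem g hg =>
    rcases hg with rfl | rfl
    · refine ⟨[], -2, ⟨by simp, by decide, by norm_num, fun _ => by norm_num⟩, ?_⟩
      rw [altProd_nil, zpow_neg, zpow_two, mul_inv_rev]
    · refine ⟨[2 * n + 1], 0, ⟨by simp, Even.zero, le_rfl, by simp⟩, ?_⟩
      simp [← zpow_natCast]
  | mul g g' _ _ ih ih' =>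
    obtain ⟨es, t, ⟨hes, ht, ht0, hnil⟩, rfl⟩ := ih
    obtain ⟨fs, s, ⟨hfs, hs, hs0, hfnil⟩, rfl⟩ := ih'
    cases fs with
    | nil =>
      refine ⟨es, t + s, ⟨hes, ht.add hs, by omega, fun h => ?_⟩, altProd_mul_nil ..⟩
      have := hnil h; have := hfnil rfl; omega
    | cons f fs =>
      refine ⟨es ++ (t + f) :: fs, s, ⟨?_, hs, hs0, by simp⟩, altProd_mul_cons ..⟩
      obtain ⟨hf, hfle⟩ := hfs f List.mem_cons_self
      simp only [List.mem_append, List.mem_cons]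
      rintro e (he | rfl | he)
      · exact hes e he
      · exact ⟨ht.add_odd hf, by omega⟩
      · exact hfs e (List.mem_cons_of_mem f he)

lemma closure_le_closure_succ (n : ℕ) :
    Subsemigroup.closure {a⁻¹ * a⁻¹, a ^ (2 * n + 1) * b} ≤
      Subsemigroup.closure {a⁻¹ * a⁻¹, a ^ (2 * (n + 1) + 1) * b} := by
  have hstep : a ^ (2 * n + 1) * b = a⁻¹ * a⁻¹ * (a ^ (2 * (n + 1) + 1) * b) := by
    rw [show 2 * (n + 1) + 1 = 2 + (2 * n + 1) by ring, pow_add]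
    group
  rw [Subsemigroup.closure_le]
  rintro g (rfl | rfl)
  · exact Subsemigroup.subset_closure (by simp)
  · rw [hstep]
    exact mul_mem (Subsemigroup.subset_closure (by simp)) (Subsemigroup.subset_closure (by simp))

end Closure

namespace Monoid.CoprodI

variable {ι : Type*} {M : ι → Type*} [∀ i, Group (M i)] {i j : ι}

lemma NeWord.head_eq_of_prod_eq {k l : ι} (w₁ : NeWord M i k) (w₂ : NeWord M i l)
    (h : w₁.prod = w₂.prod) : w₁.head = w₂.head := by
  classical
  have hword : w₁.toWord = w₂.toWord := Word.equiv.symm.injective h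
  have hhead := congrArg (fun w : Word M => w.toList.head?) hword
  simpa [NeWord.toWord] using hhead

lemma exists_neWord_altProd (hij : i ≠ j) {x : M i} {y : M j} (hy : y ≠ 1) (t : ℤ) :
    ∀ es : List ℤ, (∀ e ∈ es, x ^ e ≠ 1) → (es = [] → x ^ t ≠ 1) →
      ∃ k, ∃ w : NeWord M i k, w.head = x ^ es.headD t ∧ w.prod = altProd (of x) (of y) es t
  | [], _, ht => ⟨i, .singleton _ (ht rfl), rfl, by simp⟩
  | e :: es, hes, _ => by
    let block :=
      NeWord.append (.singleton (x ^ e) (hes e List.mem_cons_self)) hij (.singleton y hy)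
    by_cases hlast : es = [] ∧ x ^ t = 1
    · obtain ⟨rfl, ht⟩ := hlast
      exact ⟨j, block, rfl, by simp [block, ← map_zpow, ht]⟩
    · obtain ⟨k, w, -, hw⟩ := exists_neWord_altProd hij hy t es
        (fun f hf => hes f (List.mem_cons_of_mem e hf)) (fun hnil ht => hlast ⟨hnil, ht⟩)
      exact ⟨k, block.append hij.symm w, rfl, by simp [block, hw, map_zpow, mul_assoc]⟩

theorem of_pow_mul_of_notMem_closure (hij : i ≠ j) {x : M i} {y : M j} (hx : ¬IsOfFinOrder x)
    (hy : y ≠ 1) {n k : ℕ} (hk : 2 * n + 1 < k) :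
    of x ^ k * of y ∉ Subsemigroup.closure {(of x)⁻¹ * (of x)⁻¹, of x ^ (2 * n + 1) * of y} := by
  intro hmem
  obtain ⟨es, t, hadm, hprod⟩ := exists_admissibleExponents_of_mem_closure _ _ hmem
  have hinj := injective_zpow_iff_not_isOfFinOrder.mpr hx
  have hpow : ∀ e : ℤ, e ≠ 0 → x ^ e ≠ 1 := fun e he h1 =>
    he (hinj (h1.trans (zpow_zero x).symm))
  obtain ⟨_, w₁, hw₁, hprod₁⟩ := exists_neWord_altProd hij hy 0 [(k : ℤ)]
    (by simpa using hpow k (by omega)) (by simp)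
  obtain ⟨_, w₂, hw₂, hprod₂⟩ := exists_neWord_altProd hij hy t es
    (fun e he => hpow e (by have := Int.odd_iff.mp (hadm.1 e he).1; omega))
    (fun hnil => hpow t (hadm.2.2.2 hnil).ne)
  have hhead := NeWord.head_eq_of_prod_eq w₁ w₂ (by
    rw [hprod₁, hprod₂, ← hprod]; simp)
  rw [hw₁, hw₂] at hhead
  have hfirst : (k : ℤ) = es.headD t := hinj hhead
  have := hadm.headD_le
  omega

end Monoid.CoprodI

namespace Monoid.Coprod

universe u v

variable {M : Type u} {N : Type v} [Group M] [Group N]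

-- `CoprodI` needs all summands in one universe.
variable (M N) in
abbrev summands : Bool → Type (max u v)
  | true => ULift.{v} M
  | false => ULift.{u} N

instance : ∀ b, Group (summands M N b)
  | true => inferInstanceAs (Group (ULift M))
  | false => inferInstanceAs (Group (ULift N))

variable (M N) in
def toCoprodI : M ∗ N →* CoprodI (summands M N) :=
  lift ((CoprodI.of (i := true)).comp MulEquiv.ulift.symm.toMonoidHom)
    ((CoprodI.of (M := summands M N) (i := false)).comp MulEquiv.ulift.symm.toMonoidHom)

theorem inl_pow_mul_inr_notMem_closure {x : M} (hx : ¬IsOfFinOrder x) {y : N} (hy : y ≠ 1)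
    {n k : ℕ} (hk : 2 * n + 1 < k) :
    (inl x : M ∗ N) ^ k * inr y ∉
      Subsemigroup.closure {(inl x)⁻¹ * (inl x)⁻¹, inl x ^ (2 * n + 1) * inr y} := by
  intro hmem
  have hmap := Subsemigroup.mem_map_of_mem (toCoprodI M N).toMulHom hmem
  rw [MulHom.map_mclosure, Set.image_pair] at hmap
  simp only [map_mul, map_inv, map_pow] at hmap
  refine CoprodI.of_pow_mul_of_notMem_closure (by decide) (fun hfin => hx ?_)
    (fun h1 => hy (congrArg ULift.down h1)) hk hmap
  exact MulEquiv.ulift.toMonoidHom.isOfFinOrder hfin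

end Monoid.Coprod

/-- for a nontrivial group `H`, the free product `ℤ ∗ H` (the
coproduct of groups) is not in Tak(𝒮): with `a` the image of a generator of ℤ,
`b ≠ 1` the image of an element of `H`, and `S n` the subsemigroup generated by
`a⁻² ` and `a^(2(n+1)-1) * b` (so `S n` is the paper's `S_{n+1}`), the chain
`S 0 ⊆ S 1 ⊆ ⋯` is ascending, of rank at most 2, with all inclusions strict;
in particular it is not stationary. -/
theorem stmt_1 (H : Type*) [Group H] (h : H) (hh : h ≠ 1) :
    let a : (Multiplicative ℤ) ∗ H := Coprod.inl (Multiplicative.ofAdd (1 : ℤ))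
    let b : (Multiplicative ℤ) ∗ H := Coprod.inr h
    let S : ℕ → Subsemigroup ((Multiplicative ℤ) ∗ H) := fun n =>
      Subsemigroup.closure {a⁻¹ * a⁻¹, a ^ (2 * n + 1) * b}
    (∀ n, S n ≤ S (n + 1)) ∧
    (∀ n, ∃ A : Finset ((Multiplicative ℤ) ∗ H), A.card ≤ 2 ∧
      Subsemigroup.closure (A : Set ((Multiplicative ℤ) ∗ H)) = S n) ∧
    (∀ n, S n ≠ S (n + 1)) ∧
    ¬ ∃ p, ∀ n, p ≤ n → S n = S p := by
  intro a b S
  have hinf : ¬IsOfFinOrder (Multiplicative.ofAdd (1 : ℤ)) := fun hfin =>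
    not_isOfFinAddOrder_of_isAddTorsionFree one_ne_zero (isOfFinOrder_ofAdd_iff.mp hfin)
  have hstrict : ∀ n, S n ≠ S (n + 1) := fun n hS =>
    Coprod.inl_pow_mul_inr_notMem_closure hinf hh (by omega)
      (hS ▸ Subsemigroup.subset_closure (by simp) : a ^ (2 * (n + 1) + 1) * b ∈ S n)
  classical
  refine ⟨closure_le_closure_succ a b, fun n => ⟨{a⁻¹ * a⁻¹, a ^ (2 * n + 1) * b},
    Finset.card_le_two, by simp [S]⟩, hstrict, ?_⟩
  rintro ⟨p, hp⟩
  exact hstrict p (hp (p + 1) p.le_succ).symm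
end

section
/- Every ascending chain S_1 ≤ S_2 ≤ S_3 ≤ ⋯ of additive subsemigroups of ℕ is stationary: there exists p ≥ 1 such that S_n = S_p for all n ≥ p. In particular, the additive semigroup ℕ belongs to Tak(𝒮). -/
/-! If `0 < a ∈ T`, then `T` is determined by the least element of each residue class
modulo `a`, since everything above it in its class is reached by adding copies of `a`.
Along an ascending chain these minima decrease in the well-founded order `Fin a → ℕ∞`, so they
stabilize, and then so does the chain. A chain without positive elements lives inside `{0}`. -/

namespace AddSubsemigroup

variable {T T' : AddSubsemigroup ℕ} {a x y : ℕ}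

theorem add_mul_mem (ha : a ∈ T) (hy : y ∈ T) (k : ℕ) : y + a * k ∈ T := by
  induction k with
  | zero => simpa using hy
  | succ k ih => simpa only [mul_add_one, ← add_assoc] using T.add_mem ih ha

theorem mem_of_le_of_modEq (ha : a ∈ T) (hy : y ∈ T) (hyx : y ≤ x) (hmod : y ≡ x [MOD a]) :
    x ∈ T := by
  obtain ⟨k, hk⟩ := (Nat.modEq_iff_dvd' hyx).mp hmod
  rw [show x = y + a * k by omega]
  exact add_mul_mem ha hy k

/-- The least element of `T` congruent to `r` modulo `a`, or `⊤` if there is none. -/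
noncomputable def leastInClass (T : AddSubsemigroup ℕ) (a r : ℕ) : ℕ∞ :=
  sInf ((↑) '' {x | x ∈ T ∧ x % a = r})

theorem leastInClass_anti (h : T ≤ T') (a r : ℕ) : leastInClass T' a r ≤ leastInClass T a r :=
  sInf_le_sInf <| Set.image_mono fun _ hx => ⟨h hx.1, hx.2⟩

theorem leastInClass_le (hx : x ∈ T) : leastInClass T a (x % a) ≤ x :=
  sInf_le ⟨x, ⟨hx, rfl⟩, rfl⟩

theorem mem_of_leastInClass_le (ha : a ∈ T) (h : leastInClass T a (x % a) ≤ x) : x ∈ T := by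
  set C := {y | y ∈ T ∧ y % a = x % a}
  have hC : ((↑) '' C : Set ℕ∞).Nonempty := by
    by_contra hempty
    rw [Set.not_nonempty_iff_eq_empty] at hempty
    simp [leastInClass, C, hempty] at h
  obtain ⟨y, ⟨hyT, hyx⟩, hy⟩ := csInf_mem hC
  refine mem_of_le_of_modEq ha hyT ?_ hyx
  exact_mod_cast hy.trans_le h

theorem monotone_stabilizes_of_mem {S : ℕ → AddSubsemigroup ℕ} (hS : Monotone S)
    (ha : 0 < a) (haS : ∀ n, a ∈ S n) : ∃ p, ∀ n, p ≤ n → S n = S p := by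
  obtain ⟨p, hp⟩ := WellFoundedLT.antitone_chain_condition
    (f := fun n (r : Fin a) => leastInClass (S n) a r) fun _ _ h _ => leastInClass_anti (hS h) _ _
  refine ⟨p, fun n hn => le_antisymm (fun x hx => ?_) (hS hn)⟩
  refine mem_of_leastInClass_le (haS p) ?_
  have := congrFun (hp n hn) ⟨x % a, Nat.mod_lt x ha⟩
  exact this ▸ leastInClass_le hx

theorem monotone_stabilizes_of_le_zero {S : ℕ → AddSubsemigroup ℕ} (hS : Monotone S)
    (hzero : ∀ n, ∀ x ∈ S n, x = 0) : ∃ p, ∀ n, p ≤ n → S n = S p := by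
  -- Whether `0 ∈ S n` is the only thing that can change along the chain.
  obtain ⟨p, hp⟩ :=
    WellFoundedGT.monotone_chain_condition ⟨fun n => 0 ∈ S n, fun _ _ h => @hS _ _ h 0⟩
  refine ⟨p, fun n hn => le_antisymm (fun x hx => ?_) (hS hn)⟩
  obtain rfl := hzero n x hx
  exact (hp n hn).mpr hx

end AddSubsemigroup

/-- every ascending chain of additive subsemigroups of ℕ is
stationary (in particular ℕ ∈ Tak(𝒮), with no rank bound needed at all). -/
theorem stmt_2 (S : ℕ → AddSubsemigroup ℕ) (hmono : Monotone S) :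
    ∃ p, ∀ n, p ≤ n → S n = S p := by
  by_cases h : ∃ N, ∃ a ∈ S N, 0 < a
  · obtain ⟨N, a, haN, ha⟩ := h
    obtain ⟨p, hp⟩ := AddSubsemigroup.monotone_stabilizes_of_mem (S := fun n => S (N + n))
      (fun m n h => hmono (by omega)) ha fun n => hmono (by omega) haN
    refine ⟨N + p, fun n hn => ?_⟩
    simpa [show N + (n - N) = n by omega] using hp (n - N) (by omega)
  · simp only [not_exists, not_and, not_lt] at h
    exact AddSubsemigroup.monotone_stabilizes_of_le_zero hmono
      fun n x hx => Nat.eq_zero_of_le_zero (h n x hx)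
end

section
/- Let S be a nonempty additive subsemigroup of ℤ. Then at least one of the following holds: S contains only non-negative integers; or S contains only non-positive integers; or S = dℤ for some natural number d (so that S is a subgroup of ℤ). -/
lemma nsmul_mem_semigroup (S : AddSubsemigroup ℤ) {x : ℤ} (hx : x ∈ S) :
    ∀ n : ℕ, 0 < n → (n : ℤ) * x ∈ S := by
  intro n hn
  induction n with
  | zero => omega
  | succ k ih =>
    rcases Nat.eq_zero_or_pos k with hk | hk
    · subst hk; simpa using hx
    · have := S.add_mem (ih hk) hx
      push_cast
      ring_nf
      push_cast at this
      ring_nf at this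
      exact this

/-- a nonempty additive subsemigroup of ℤ consists only of
non-negative integers, or only of non-positive integers, or equals dℤ for some
natural number d. -/
theorem stmt_4 (S : AddSubsemigroup ℤ) (hS : (S : Set ℤ).Nonempty) :
    (∀ x ∈ S, 0 ≤ x) ∨ (∀ x ∈ S, x ≤ 0) ∨
      ∃ d : ℕ, ∀ x : ℤ, x ∈ S ↔ (d : ℤ) ∣ x := by
  by_cases h1 : ∀ x ∈ S, 0 ≤ x
  · exact Or.inl h1
  by_cases h2 : ∀ x ∈ S, x ≤ 0
  · exact Or.inr (Or.inl h2)
  push_neg at h1 h2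
  obtain ⟨q, hqS, hq⟩ := h1
  obtain ⟨p, hpS, hp⟩ := h2
  -- key: negation closure
  have neg_mem : ∀ x ∈ S, -x ∈ S := by
    intro x hx
    rcases lt_trichotomy x 0 with hx0 | hx0 | hx0
    · -- use p > 0 : -x = (-x) * p + (p-1) * x
      have h1' : ((-x : ℤ)) * p ∈ S := by
        have := nsmul_mem_semigroup S hpS (-x).toNat (by omega)
        rwa [Int.toNat_of_nonneg (by omega)] at this
      rcases eq_or_lt_of_le (by omega : (1:ℤ) ≤ p) with hp1 | hp1
      · have : -x = (-x) * p := by rw [← hp1]; ring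
        rw [this]; exact h1'
      · have h2' : ((p - 1 : ℤ)) * x ∈ S := by
          have := nsmul_mem_semigroup S hx (p-1).toNat (by omega)
          rwa [Int.toNat_of_nonneg (by omega)] at this
        have : -x = (-x) * p + (p - 1) * x := by ring
        rw [this]; exact S.add_mem h1' h2'
    · simpa [hx0] using hx
    · -- use q < 0 : -x = x * q + (-q-1) * x
      have h1' : (x * q : ℤ) ∈ S := by
        have := nsmul_mem_semigroup S hqS x.toNat (by omega)
        have h2 := Int.toNat_of_nonneg (le_of_lt hx0)
        rw [h2] at this
        exact this
      rcases eq_or_lt_of_le (by omega : q ≤ -1) with hq1 | hq1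
      · have : -x = x * q := by rw [hq1]; ring
        rw [this]; exact h1'
      · have h2' : ((-q - 1 : ℤ)) * x ∈ S := by
          have := nsmul_mem_semigroup S hx (-q-1).toNat (by omega)
          rwa [Int.toNat_of_nonneg (by omega)] at this
        have : -x = x * q + (-q - 1) * x := by ring
        rw [this]; exact S.add_mem h1' h2'
  have zero_mem : (0 : ℤ) ∈ S := by
    have := S.add_mem hpS (neg_mem p hpS)
    simpa using this
  let H : AddSubgroup ℤ :=
    { carrier := S
      add_mem' := fun ha hb => S.add_mem ha hb
      zero_mem' := zero_mem
      neg_mem' := fun {a} ha => neg_mem a ha }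
  obtain ⟨a, ha⟩ := Int.subgroup_cyclic H
  refine Or.inr (Or.inr ⟨a.natAbs, fun x => ?_⟩)
  have hx : x ∈ S ↔ x ∈ H := Iff.rfl
  rw [hx, ha, AddSubgroup.mem_closure_singleton, Int.natAbs_dvd]
  constructor
  · rintro ⟨n, rfl⟩; exact ⟨n, by rw [zsmul_eq_mul]; push_cast; ring⟩
  · rintro ⟨n, rfl⟩; exact ⟨n, by rw [zsmul_eq_mul]; push_cast; ring⟩
end

section
/- Let S be a finite 𝒥-above semigroup, i.e., for every a ∈ S the set { x ∈ S : a ≤_𝒥 x } is finite, where a ≤_𝒥 x means a = x, or a ∈ xS, or a ∈ Sx, or a ∈ SxS. Then S belongs to Tak(𝒮): every ascending chain of subsemigroups of S of bounded rank is stationary. -/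
/-!
Fix an ultrafilter `𝒰` on `ℕ` finer than `atTop`, and generating sets `A n` of the `T n` with at
most `M` elements. As `{x | a ≤_𝒥 x}` is finite, the trace `A n ∩ {x | a ≤_𝒥 x}` is `𝒰`-almost
always one finite set `B a`, and `a ≤_𝒥 b` gives `B b ⊆ B a`. A factorisation of `a` over `A n`
only uses generators `𝒥`-above `a`, so each `t` in the union of the chain lies in
`closure (B t)`. Take `a` with `B a` of maximal size (at most `M`): since `B a, B t ⊆ B (a * t)`,
maximality forces `B (a * t) = B a`, so the union lies in `closure (B a)`, and `B a ⊆ A p` for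
some `p`.
-/

open Filter Subsemigroup

section JAbove

variable {S : Type*} [Semigroup S]

def jAbove (a : S) : Set S :=
  {x | a = x ∨ (∃ s, a = x * s) ∨ (∃ s, a = s * x) ∨ ∃ s t, a = s * x * t}

lemma mem_jAbove_iff_withOne {a x : S} :
    x ∈ jAbove a ↔ ∃ s t : WithOne S, (a : WithOne S) = s * x * t := by
  constructor
  · rintro (rfl | ⟨s, rfl⟩ | ⟨s, rfl⟩ | ⟨s, t, rfl⟩)
    · exact ⟨1, 1, by simp⟩
    · exact ⟨1, s, by simp⟩
    · exact ⟨s, 1, by simp⟩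
    · exact ⟨s, t, by simp [mul_assoc]⟩
  · rintro ⟨s, t, h⟩
    induction s using WithOne.recOneCoe <;> induction t using WithOne.recOneCoe <;>
      simp only [one_mul, mul_one, ← WithOne.coe_mul, WithOne.coe_inj] at h
    · exact Or.inl h
    · exact Or.inr (Or.inl ⟨_, h⟩)
    · exact Or.inr (Or.inr (Or.inl ⟨_, h⟩))
    · exact Or.inr (Or.inr (Or.inr ⟨_, _, h⟩))

lemma self_mem_jAbove (a : S) : a ∈ jAbove a := Or.inl rfl

lemma left_mem_jAbove_mul (a b : S) : a ∈ jAbove (a * b) := Or.inr (Or.inl ⟨b, rfl⟩)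

lemma right_mem_jAbove_mul (a b : S) : b ∈ jAbove (a * b) := Or.inr (Or.inr (Or.inl ⟨a, rfl⟩))

lemma jAbove_subset_of_mem {a b : S} (h : b ∈ jAbove a) : jAbove b ⊆ jAbove a := by
  intro x hx
  obtain ⟨s, t, ha⟩ := mem_jAbove_iff_withOne.1 h
  obtain ⟨u, v, hb⟩ := mem_jAbove_iff_withOne.1 hx
  exact mem_jAbove_iff_withOne.2 ⟨s * u, v * t, by rw [ha, hb]; simp only [mul_assoc]⟩

lemma mem_closure_inter_jAbove {s : Set S} {a : S} (h : a ∈ closure s) :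
    a ∈ closure (s ∩ jAbove a) := by
  induction h using closure_induction with
  | mem x hx => exact subset_closure ⟨hx, self_mem_jAbove x⟩
  | mul x y _ _ hx hy =>
    refine mul_mem (closure_mono ?_ hx) (closure_mono ?_ hy) <;>
      refine Set.inter_subset_inter_right _ (jAbove_subset_of_mem ?_)
    exacts [left_mem_jAbove_mul x y, right_mem_jAbove_mul x y]

end JAbove

lemma Ultrafilter.exists_eventually_eq_of_finite {ι β : Type*} (𝒰 : Ultrafilter ι) {f : ι → β}
    {s : Set β} (hs : s.Finite) (hf : ∀ i, f i ∈ s) : ∃ b, ∀ᶠ i in 𝒰, f i = b := by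
  obtain ⟨b, -, hb⟩ := (𝒰.eventually_exists_mem_iff (P := fun b i => f i = b) hs).1
    (.of_forall fun i => ⟨f i, hf i, rfl⟩)
  exact ⟨b, hb⟩

section LimitTrace

variable {S ι : Type*} [Semigroup S]

lemma exists_limitTrace (hfin : ∀ a : S, (jAbove a).Finite) (A : ι → Finset S)
    (𝒰 : Ultrafilter ι) :
    ∃ B : S → Finset S, ∀ a, ∀ᶠ i in 𝒰, (A i : Set S) ∩ jAbove a = B a := by
  classical
  choose B hB using fun a =>
    𝒰.exists_eventually_eq_of_finite (f := fun i => A i ∩ (hfin a).toFinset)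
      (Finset.finite_toSet (hfin a).toFinset.powerset) fun i => by simp
  refine ⟨B, fun a => (hB a).mono fun i hi => ?_⟩
  rw [← hi, Finset.coe_inter, Set.Finite.coe_toFinset]

variable {A : ι → Finset S} {𝒰 : Ultrafilter ι} {B : S → Finset S}
  (hB : ∀ a, ∀ᶠ i in 𝒰, (A i : Set S) ∩ jAbove a = B a)
include hB

lemma exists_limitTrace_subset (a : S) : ∃ i, (B a : Set S) ⊆ A i := by
  obtain ⟨i, hi⟩ := (hB a).exists
  exact ⟨i, hi ▸ Set.inter_subset_left⟩

lemma limitTrace_mono {a b : S} (h : b ∈ jAbove a) : B b ⊆ B a := by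
  obtain ⟨i, ha, hb⟩ := ((hB a).and (hB b)).exists
  rw [← Finset.coe_subset, ← ha, ← hb]
  exact Set.inter_subset_inter_right _ (jAbove_subset_of_mem h)

lemma mem_closure_limitTrace {t : S} (ht : ∀ᶠ i in 𝒰, t ∈ closure (A i : Set S)) :
    t ∈ closure (B t : Set S) := by
  obtain ⟨i, hi, hti⟩ := ((hB t).and ht).exists
  exact hi ▸ mem_closure_inter_jAbove hti

lemma mem_closure_limitTrace_of_forall_card_le {a t : S} (ha : ∀ b, (B b).card ≤ (B a).card)
    (ht : ∀ᶠ i in 𝒰, t ∈ closure (A i : Set S)) : t ∈ closure (B a : Set S) := by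
  have hat : B (a * t) = B a :=
    (Finset.eq_of_subset_of_card_le (limitTrace_mono hB (left_mem_jAbove_mul a t)) (ha _)).symm
  refine closure_mono ?_ (mem_closure_limitTrace hB ht)
  rw [← hat]
  exact Finset.coe_subset.2 (limitTrace_mono hB (right_mem_jAbove_mul a t))

end LimitTrace

/-- a finite 𝒥-above semigroup belongs to Tak(𝒮): if for every
`a` the set of `x` with `a ≤_𝒥 x` (i.e. `a ∈ S¹xS¹`) is finite, then every
ascending chain of subsemigroups of bounded rank is stationary. -/
theorem stmt_7 (S : Type*) [Semigroup S]
    (hfin : ∀ a : S, {x : S | a = x ∨ (∃ s, a = x * s) ∨ (∃ s, a = s * x) ∨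
      ∃ s t, a = s * x * t}.Finite)
    (M : ℕ) (T : ℕ → Subsemigroup S) (hmono : Monotone T)
    (hrk : ∀ n, ∃ A : Finset S, A.card ≤ M ∧
      Subsemigroup.closure (A : Set S) = T n) :
    ∃ p, ∀ n, p ≤ n → T n = T p := by
  choose A hAcard hAT using hrk
  obtain hS | hS := isEmpty_or_nonempty S
  · exact ⟨0, fun _ _ => SetLike.ext isEmptyElim⟩
  let 𝒰 := Ultrafilter.of (atTop : Filter ℕ)
  obtain ⟨B, hB⟩ := exists_limitTrace hfin A 𝒰
  have hcard : ∀ a, (B a).card ≤ M := fun a => by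
    obtain ⟨i, hi⟩ := exists_limitTrace_subset hB a
    exact (Finset.card_le_card (Finset.coe_subset.1 hi)).trans (hAcard i)
  obtain ⟨-, ⟨a, rfl⟩, hmax⟩ := BddAbove.exists_isGreatest_of_nonempty
    (⟨M, Set.forall_mem_range.2 hcard⟩ : BddAbove (Set.range fun a => (B a).card))
    (Set.range_nonempty _)
  obtain ⟨p, hp⟩ := exists_limitTrace_subset hB a
  refine ⟨p, fun n hpn => le_antisymm (fun t ht => ?_) (hmono hpn)⟩
  have ht' : ∀ᶠ i in 𝒰, t ∈ closure (A i : Set S) :=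
    Ultrafilter.of_le _ (eventually_ge_atTop n |>.mono fun i hi => (hAT i).symm ▸ hmono hi ht)
  rw [← hAT p]
  exact closure_mono hp
    (mem_closure_limitTrace_of_forall_card_le hB (Set.forall_mem_range.1 hmax) ht')
end

section
/- For every set A, the free semigroup on A and the free monoid on A belong to Tak(𝒮): every ascending chain of subsemigroups of the free semigroup on A (respectively of the free monoid on A) of bounded rank is stationary. -/
open Subsemigroup

private lemma finset_sub_chain {S : Type*} [Mul S] (T : ℕ → Subsemigroup S)
    (hT : Monotone T) (F : Finset S) (h : ∀ f ∈ F, ∃ n, f ∈ T n) :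
    ∃ N, ∀ f ∈ F, f ∈ T N := by
  classical
  induction F using Finset.induction with
  | empty => exact ⟨0, by simp⟩
  | @insert a s hxs ih =>
    obtain ⟨N, hN⟩ := ih (fun f hf => h f (Finset.mem_insert_of_mem hf))
    obtain ⟨m, hm⟩ := h a (Finset.mem_insert_self a s)
    refine ⟨max N m, fun f hf => ?_⟩
    rcases Finset.mem_insert.mp hf with rfl | hf
    · exact hT (le_max_right N m) hm
    · exact hT (le_max_left N m) (hN f hf)

private lemma key_lemma {S : Type*} [Semigroup S] (ℓ : S → ℕ)
    (hmul : ∀ a b : S, ℓ (a * b) = ℓ a + ℓ b)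
    (hzero : ∀ x : S, ℓ x = 0 → ∀ y : S, x * y = y ∧ y * x = y)
    (M : ℕ) (T : ℕ → Subsemigroup S) (hT : Monotone T)
    (hB : ∀ n, ∃ B : Finset S, B.card ≤ M ∧
      Subsemigroup.closure (B : Set S) = T n) :
    ∃ p, ∀ n, p ≤ n → T n = T p := by
  classical
  set U : Set S := ⋃ n, (T n : Set S) with hU
  set D : Set S := {t | t ∈ U ∧ 0 < ℓ t ∧
    ¬ ∃ a b : S, a ∈ U ∧ b ∈ U ∧ 0 < ℓ a ∧ 0 < ℓ b ∧ t = a * b} with hD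
  -- every positive-length element of U lies in closure D
  have hgen : ∀ t, t ∈ U → 0 < ℓ t → t ∈ Subsemigroup.closure D := by
    have : ∀ k, ∀ t, t ∈ U → 0 < ℓ t → ℓ t ≤ k → t ∈ Subsemigroup.closure D := by
      intro k
      induction k with
      | zero => intro t _ h1 h2; omega
      | succ k ih =>
        intro t htU h1 h2
        by_cases hd : t ∈ D
        · exact Subsemigroup.subset_closure hd
        · have : ∃ a b : S, a ∈ U ∧ b ∈ U ∧ 0 < ℓ a ∧ 0 < ℓ b ∧ t = a * b := by
            by_contra hc
            exact hd ⟨htU, h1, hc⟩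
          obtain ⟨a, b, haU, hbU, ha, hb, rfl⟩ := this
          rw [hmul] at h2
          exact mul_mem (ih a haU ha (by omega)) (ih b hbU hb (by omega))
    exact fun t h1 h2 => this (ℓ t) t h1 h2 le_rfl
  -- indecomposables lie in every generating set
  have hind : ∀ d ∈ D, ∀ n, ∀ B : Finset S,
      Subsemigroup.closure (B : Set S) = T n → d ∈ T n → d ∈ B := by
    intro d hd n B hBn hdT
    have hsub : (T n : Set S) ⊆ U := Set.subset_iUnion (fun n => (T n : Set S)) n
    have hclo : ∀ x, x ∈ Subsemigroup.closure (B : Set S) → x ∈ (B : Set S) ∨ ℓ x = 0 ∨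
        ∃ a b : S, a ∈ U ∧ b ∈ U ∧ 0 < ℓ a ∧ 0 < ℓ b ∧ x = a * b := by
      intro z hz
      induction hz using Subsemigroup.closure_induction with
      | mem x hx => exact Or.inl hx
      | mul x y hx hy px py =>
        rcases Nat.eq_zero_or_pos (ℓ x) with h0 | hxp
        · rw [(hzero x h0 y).1]; exact py
        rcases Nat.eq_zero_or_pos (ℓ y) with h0 | hyp
        · rw [(hzero y h0 x).2]; exact px
        have hxU : x ∈ U := hsub (hBn ▸ hx)
        have hyU : y ∈ U := hsub (hBn ▸ hy)
        exact Or.inr (Or.inr ⟨x, y, hxU, hyU, hxp, hyp, rfl⟩)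
    rcases hclo d (hBn ▸ hdT) with h | h | h
    · exact h
    · exact absurd h (by have := hd.2.1; omega)
    · exact absurd h hd.2.2
  -- D is finite
  have hDfin : D.Finite := by
    by_contra hinf
    obtain ⟨F, hFD, hFcard⟩ :=
      (Set.not_infinite.not_right.mpr hinf : D.Infinite).exists_subset_card_eq (M + 1)
    obtain ⟨N, hN⟩ := finset_sub_chain T hT F (fun f hf => by
      have := (hFD hf).1
      simpa [hU, Set.mem_iUnion] using this)
    obtain ⟨B, hBcard, hBN⟩ := hB N
    have hFB : F ⊆ B := fun f hf => hind f (hFD hf) N B hBN (hN f hf)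
    have := Finset.card_le_card hFB
    omega
  -- the zero-length elements of U form a finite set
  have hZfin : ({x ∈ U | ℓ x = 0} : Set S).Finite := by
    apply Set.Subsingleton.finite
    intro x hx y hy
    have h1 := (hzero x hx.2 y).1
    have h2 := (hzero y hy.2 x).2
    rw [h2] at h1
    exact h1
  -- pick p containing D and the zero-length elements
  have hEfin : (D ∪ {x ∈ U | ℓ x = 0}).Finite := hDfin.union hZfin
  obtain ⟨p, hp⟩ := finset_sub_chain T hT hEfin.toFinset (fun f hf => by
    rw [Set.Finite.mem_toFinset] at hf
    rcases hf with hf | hf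
    · simpa [hU, Set.mem_iUnion] using hf.1
    · simpa [hU, Set.mem_iUnion] using hf.1)
  refine ⟨p, fun n hn => le_antisymm (fun t ht => ?_) (hT hn)⟩
  have htU : t ∈ U := Set.subset_iUnion (fun n => (T n : Set S)) n ht
  rcases Nat.eq_zero_or_pos (ℓ t) with h0 | hpos
  · exact hp t (by rw [Set.Finite.mem_toFinset]; exact Or.inr ⟨htU, h0⟩)
  · have hDsub : D ⊆ (T p : Set S) := fun d hd =>
      hp d (by rw [Set.Finite.mem_toFinset]; exact Or.inl hd)
    exact (Subsemigroup.closure_le.mpr hDsub) (hgen t htU hpos)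

/-- for every set `A`, the free semigroup on `A` and the free
monoid on `A` belong to Tak(𝒮): every ascending chain of subsemigroups of
bounded rank is stationary. -/
theorem stmt_8 (A : Type*) :
    (∀ (M : ℕ) (T : ℕ → Subsemigroup (FreeSemigroup A)), Monotone T →
      (∀ n, ∃ B : Finset (FreeSemigroup A), B.card ≤ M ∧
        Subsemigroup.closure (B : Set (FreeSemigroup A)) = T n) →
      ∃ p, ∀ n, p ≤ n → T n = T p) ∧
    (∀ (M : ℕ) (T : ℕ → Subsemigroup (FreeMonoid A)), Monotone T →
      (∀ n, ∃ B : Finset (FreeMonoid A), B.card ≤ M ∧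
        Subsemigroup.closure (B : Set (FreeMonoid A)) = T n) →
      ∃ p, ∀ n, p ≤ n → T n = T p) := by
  constructor
  · intro M T hT hB
    exact key_lemma FreeSemigroup.length (FreeSemigroup.length_mul)
      (fun x hx => by simp [FreeSemigroup.length] at hx) M T hT hB
  · intro M T hT hB
    refine key_lemma FreeMonoid.length (FreeMonoid.length_mul)
      (fun x hx y => ?_) M T hT hB
    have : x = 1 := FreeMonoid.length_eq_zero.mp hx
    simp [this]
end

section
/- Let A be a set and let r be a binary relation on the free monoid A* such that |u| = |v| whenever u r v (a balanced presentation). Let M be the quotient of A* by the monoid congruence generated by r. Then M belongs to Tak(𝒮): every ascending chain of subsemigroups of M of bounded rank is stationary. -/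
/-!
A balanced presentation makes word length well defined on the quotient, so the monoid is graded
by length with only `1` in degree `0`. Let `U` be the union of the chain. An indecomposable
element of `U` (not `1` and not a product of two non-identity elements of `U`) that lies in `T n`
must belong to every generating set of `T n`, so `U` has at most `M` indecomposables. By induction
on length, these together with `1` (if `1 ∈ U`) generate `U`; this finite set lies in some `T p`,
and then `T n = T p` for all `n ≥ p`.
-/

namespace Subsemigroup

variable {Q : Type*} [Monoid Q]

def indecomposables (S : Subsemigroup Q) : Set Q :=
  {t | t ∈ S ∧ t ≠ 1 ∧ ∀ a ∈ S, ∀ b ∈ S, a ≠ 1 → b ≠ 1 → a * b ≠ t}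

theorem indecomposables_subset {S : Subsemigroup Q} : S.indecomposables ⊆ S :=
  fun _ ht => ht.1

theorem indecomposables_inter_closure_subset {S : Subsemigroup Q} {B : Set Q}
    (hB : closure B ≤ S) :
    S.indecomposables ∩ closure B ⊆ B := by
  rintro t ⟨⟨-, ht1, htS⟩, htB⟩
  suffices t = 1 ∨ (∃ a ∈ S, ∃ b ∈ S, a ≠ 1 ∧ b ≠ 1 ∧ a * b = t) ∨ t ∈ B by
    rcases this with h | ⟨a, ha, b, hb, ha1, hb1, rfl⟩ | h
    · exact absurd h ht1
    · exact absurd rfl (htS a ha b hb ha1 hb1)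
    · exact h
  clear ht1 htS
  induction htB using closure_induction with
  | mem x hx => exact .inr (.inr hx)
  | mul x y hxB hyB hx hy =>
    by_cases hx1 : x = 1
    · simpa [hx1] using hy
    by_cases hy1 : y = 1
    · simpa [hy1] using hx
    exact .inr (.inl ⟨x, hB hxB, y, hB hyB, hx1, hy1, rfl⟩)

theorem le_closure_indecomposables_union_one {f : Q → ℕ} (hmul : ∀ x y, f (x * y) = f x + f y)
    (hzero : ∀ x, f x = 0 → x = 1) (S : Subsemigroup Q) :
    S ≤ closure (S.indecomposables ∪ ((S : Set Q) ∩ {1})) := by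
  intro t ht
  induction hn : f t using Nat.strong_induction_on generalizing t with
  | _ n ih =>
  by_cases ht1 : t = 1
  · exact subset_closure (.inr ⟨ht, ht1⟩)
  by_cases hdec : t ∈ S.indecomposables
  · exact subset_closure (.inl hdec)
  obtain ⟨a, ha, b, hb, ha1, hb1, rfl⟩ :
      ∃ a ∈ S, ∃ b ∈ S, a ≠ 1 ∧ b ≠ 1 ∧ a * b = t := by
    simpa [indecomposables, ht, ht1] using hdec
  have hfa : f a ≠ 0 := fun h => ha1 (hzero a h)
  have hfb : f b ≠ 0 := fun h => hb1 (hzero b h)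
  rw [hmul] at hn
  exact mul_mem (ih (f a) (by omega) ha rfl) (ih (f b) (by omega) hb rfl)

theorem monotone_stabilizes_of_rank_le {f : Q → ℕ} (hmul : ∀ x y, f (x * y) = f x + f y)
    (hzero : ∀ x, f x = 0 → x = 1) {M : ℕ} {T : ℕ → Subsemigroup Q} (hmono : Monotone T)
    (hrk : ∀ n, ∃ B : Finset Q, B.card ≤ M ∧ closure (B : Set Q) = T n) :
    ∃ p, ∀ n, p ≤ n → T n = T p := by
  set U := ⨆ n, T n
  have hU : (U : Set Q) = ⋃ n, (T n : Set Q) := coe_iSup_of_directed hmono.directed_le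
  have hfin : ∀ s : Finset Q, (s : Set Q) ⊆ U → ∃ n, (s : Set Q) ⊆ T n := fun s hs =>
    have hdir : Directed (· ⊆ ·) fun n => (T n : Set Q) :=
      Monotone.directed_le fun _ _ h => SetLike.coe_mono (hmono h)
    hdir.exists_mem_subset_of_finset_subset_biUnion (hU ▸ hs)
  have hcard : ∀ s : Finset Q, (s : Set Q) ⊆ U.indecomposables → s.card ≤ M := by
    intro s hs
    obtain ⟨n, hn⟩ := hfin s (hs.trans indecomposables_subset)
    obtain ⟨B, hBM, hB⟩ := hrk n
    have hBU : closure (B : Set Q) ≤ U := hB ▸ le_iSup T n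
    have hsB : s ⊆ B := fun t ht =>
      indecomposables_inter_closure_subset hBU ⟨hs ht, hB ▸ hn ht⟩
    exact (Finset.card_le_card hsB).trans hBM
  have hGfin : (U.indecomposables ∪ ((U : Set Q) ∩ {1})).Finite := by
    refine .union ?_ ((Set.finite_singleton 1).inter_of_right _)
    by_contra hinf
    obtain ⟨s, hs, hsM⟩ := Set.Infinite.exists_subset_card_eq hinf (M + 1)
    have := hcard s hs
    omega
  obtain ⟨p, hp⟩ := hfin hGfin.toFinset (by
    rw [hGfin.coe_toFinset]
    exact Set.union_subset indecomposables_subset Set.inter_subset_left)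
  refine ⟨p, fun n hn => le_antisymm ?_ (hmono hn)⟩
  calc T n ≤ U := le_iSup T n
    _ ≤ closure (U.indecomposables ∪ ((U : Set Q) ∩ {1})) :=
      le_closure_indecomposables_union_one hmul hzero U
    _ ≤ T p := closure_le.2 (by simpa using hp)

end Subsemigroup

namespace Con

variable {N : Type*} [Monoid N] {f : N → ℕ} {r : N → N → Prop}

theorem eq_of_conGen (hmul : ∀ x y, f (x * y) = f x + f y) (hr : ∀ u v, r u v → f u = f v)
    {u v : N} (h : conGen r u v) : f u = f v := by
  induction h with
  | of _ _ h => exact hr _ _ h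
  | refl => rfl
  | symm _ ih => exact ih.symm
  | trans _ _ ih₁ ih₂ => exact ih₁.trans ih₂
  | mul _ _ ih₁ ih₂ => rw [hmul, hmul, ih₁, ih₂]

theorem exists_length_conGen_quotient (hmul : ∀ x y, f (x * y) = f x + f y)
    (hzero : ∀ x, f x = 0 → x = 1) (hr : ∀ u v, r u v → f u = f v) :
    ∃ g : (conGen r).Quotient → ℕ,
      (∀ x y, g (x * y) = g x + g y) ∧ ∀ x, g x = 0 → x = 1 := by
  refine ⟨fun x => x.liftOn f fun _ _ => eq_of_conGen hmul hr, ?_, ?_⟩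
  · rintro ⟨u⟩ ⟨v⟩
    exact hmul u v
  · rintro ⟨u⟩ hu
    exact congrArg _ (hzero u hu)

end Con

/-- a monoid defined by a balanced presentation belongs to
Tak(𝒮): if `r` is a relation on the free monoid `A*` with `|u| = |v|` whenever
`r u v`, and `M` is the quotient of `A*` by the congruence generated by `r`,
then every ascending chain of subsemigroups of `M` of bounded rank is
stationary. -/
theorem stmt_9 (A : Type*) (r : FreeMonoid A → FreeMonoid A → Prop)
    (hbal : ∀ u v, r u v → u.length = v.length)
    (M : ℕ) (T : ℕ → Subsemigroup (conGen r).Quotient) (hmono : Monotone T)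
    (hrk : ∀ n, ∃ B : Finset (conGen r).Quotient, B.card ≤ M ∧
      Subsemigroup.closure (B : Set (conGen r).Quotient) = T n) :
    ∃ p, ∀ n, p ≤ n → T n = T p := by
  obtain ⟨len, hmul, hzero⟩ := Con.exists_length_conGen_quotient FreeMonoid.length_mul
    (fun _ => FreeMonoid.length_eq_zero.1) hbal
  exact Subsemigroup.monotone_stabilizes_of_rank_le hmul hzero hmono hrk
end

section
/- Let A be a finite alphabet, let G be a group, and let φ : (A ∪ A^{−1})* → G be a matched monoid homomorphism onto G, i.e., a monoid homomorphism from the free monoid on the disjoint union A ⊕ A^{−1} (where A^{−1} is a set of formal inverses of A) such that φ(a^{−1}) = φ(a)^{−1} for every a ∈ A. Let 𝒜 = (Q, q₀, T, E) be a finite (A ∪ A^{−1})-automaton: Q a finite set of vertices, q₀ ∈ Q, T ⊆ Q, and E ⊆ Q × (A ∪ A^{−1}) × Q a set of edges; the language L(𝒜) is the set of words labeling paths from q₀ to some vertex of T. Assume φ(L(𝒜)) = G. Then: (i) G is generated as a group by a set of cardinality at most |E|; and (ii) if moreover 𝒜 is trim (every vertex lies on some path from q₀ to T), then G is generated as a group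 by a set of cardinality at most |E| − |Q| + |{q₀} ∪ T|. -/
/-- `IsPath E p w q` means the word `w` labels a path from `p` to `q` using
edges in `E`. -/
def IsPath {Q X : Type*} (E : Set (Q × X × Q)) : Q → List X → Q → Prop
  | p, [], q => p = q
  | p, x :: w, q => ∃ r : Q, (p, x, r) ∈ E ∧ IsPath E r w q

namespace Stmt10Aux

open scoped Classical

variable {Q X : Type*} (E : Set (Q × X × Q)) (q₀ : Q)

/-- Accessibility from `q₀`. -/
def Accessible (q : Q) : Prop := ∃ w : List X, IsPath E q₀ w q

theorem isPath_append {p q : Q} {w₁ w₂ : List X} :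
    IsPath E p (w₁ ++ w₂) q ↔ ∃ r, IsPath E p w₁ r ∧ IsPath E r w₂ q := by
  induction w₁ generalizing p with
  | nil =>
    constructor
    · intro h; exact ⟨p, rfl, h⟩
    · rintro ⟨r, rfl, h⟩; exact h
  | cons x w ih =>
    constructor
    · rintro ⟨r, hr, h⟩
      obtain ⟨s, hs1, hs2⟩ := (ih).1 h
      exact ⟨s, ⟨r, hr, hs1⟩, hs2⟩
    · rintro ⟨s, ⟨r, hr, h1⟩, h2⟩
      exact ⟨r, hr, (ih).2 ⟨s, h1, h2⟩⟩

noncomputable def dist (q : Q) : ℕ :=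
  sInf {n | ∃ w : List X, IsPath E q₀ w q ∧ w.length = n}

theorem exists_parent {q : Q} (h1 : Accessible E q₀ q) (h2 : q ≠ q₀) :
    ∃ p : Q × X, (p.1, p.2, q) ∈ E ∧ Accessible E q₀ p.1 ∧
      dist E q₀ p.1 < dist E q₀ q := by
  obtain ⟨w, hw⟩ := h1
  have hne : {n | ∃ w : List X, IsPath E q₀ w q ∧ w.length = n}.Nonempty :=
    ⟨w.length, w, hw, rfl⟩
  obtain ⟨v, hv, hvl⟩ := Nat.sInf_mem hne
  have hvne : v ≠ [] := by
    rintro rfl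
    exact h2 hv.symm
  have hveq : v = v.dropLast ++ [v.getLast hvne] := (List.dropLast_append_getLast hvne).symm
  rw [hveq] at hv
  obtain ⟨r, hr1, hr2⟩ := (isPath_append E).1 hv
  obtain ⟨s, hs1, hs2⟩ := hr2
  have hs2' : s = q := hs2
  subst hs2'
  refine ⟨(r, v.getLast hvne), hs1, ⟨_, hr1⟩, ?_⟩
  have hle : dist E q₀ r ≤ v.dropLast.length := Nat.sInf_le ⟨v.dropLast, hr1, rfl⟩
  have : v.dropLast.length < v.length := by
    rw [List.length_dropLast]
    have : v.length ≠ 0 := by simpa using hvne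
    omega
  simp only [dist] at hle ⊢
  omega

noncomputable def tePair {q : Q} (h1 : Accessible E q₀ q) (h2 : q ≠ q₀) : Q × X :=
  (exists_parent E q₀ h1 h2).choose

theorem tePair_mem {q : Q} (h1 : Accessible E q₀ q) (h2 : q ≠ q₀) :
    ((tePair E q₀ h1 h2).1, (tePair E q₀ h1 h2).2, q) ∈ E :=
  (exists_parent E q₀ h1 h2).choose_spec.1

theorem tePair_acc {q : Q} (h1 : Accessible E q₀ q) (h2 : q ≠ q₀) :
    Accessible E q₀ (tePair E q₀ h1 h2).1 :=
  (exists_parent E q₀ h1 h2).choose_spec.2.1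

theorem tePair_dist {q : Q} (h1 : Accessible E q₀ q) (h2 : q ≠ q₀) :
    dist E q₀ (tePair E q₀ h1 h2).1 < dist E q₀ q :=
  (exists_parent E q₀ h1 h2).choose_spec.2.2

noncomputable def treeWord (q : Q) : List X :=
  if h : Accessible E q₀ q ∧ q ≠ q₀ then
    treeWord (tePair E q₀ h.1 h.2).1 ++ [(tePair E q₀ h.1 h.2).2]
  else []
termination_by dist E q₀ q
decreasing_by exact tePair_dist E q₀ h.1 h.2

theorem treeWord_base {q : Q} (h : ¬(Accessible E q₀ q ∧ q ≠ q₀)) :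
    treeWord E q₀ q = [] := by
  rw [treeWord, dif_neg h]

theorem treeWord_q₀ : treeWord E q₀ q₀ = [] :=
  treeWord_base E q₀ (by simp)

theorem treeWord_spec {q : Q} (h1 : Accessible E q₀ q) (h2 : q ≠ q₀) :
    treeWord E q₀ q =
      treeWord E q₀ (tePair E q₀ h1 h2).1 ++ [(tePair E q₀ h1 h2).2] := by
  rw [treeWord, dif_pos ⟨h1, h2⟩]

theorem isPath_treeWord {q : Q} (h : Accessible E q₀ q) :
    IsPath E q₀ (treeWord E q₀ q) q := by
  by_cases h2 : q = q₀
  · subst h2; rw [treeWord_q₀]; exact rfl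
  · rw [treeWord_spec E q₀ h h2]
    exact (isPath_append E).2 ⟨(tePair E q₀ h h2).1,
      isPath_treeWord (tePair_acc E q₀ h h2), ⟨q, tePair_mem E q₀ h h2, rfl⟩⟩
termination_by dist E q₀ q
decreasing_by exact tePair_dist E q₀ h h2

end Stmt10Aux

open Stmt10Aux

/-- let `A` be a finite alphabet, `φ` a matched monoid
homomorphism from the free monoid on `A ⊕ A` (with `Sum.inl a` the letter `a`
and `Sum.inr a` its formal inverse `a⁻¹`) onto a group `G`, and let
`𝒜 = (Q, q₀, T, E)` be a finite automaton over `A ⊕ A` with `φ(L(𝒜)) = G`.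
Then (i) `G` has a group generating set of cardinality at most `|E|`, and
(ii) if `𝒜` is trim then `G` has a group generating set of cardinality at most
`|E| - |Q| + |{q₀} ∪ T|`. -/
theorem stmt_10 (A Q : Type*) [Fintype A] [Fintype Q] [DecidableEq Q]
    (G : Type*) [Group G] (φ : FreeMonoid (A ⊕ A) →* G)
    (hmatched : ∀ a : A,
      φ (FreeMonoid.of (Sum.inr a)) = (φ (FreeMonoid.of (Sum.inl a)))⁻¹)
    (hsurj : Function.Surjective φ)
    (q₀ : Q) (T : Finset Q) (E : Finset (Q × (A ⊕ A) × Q))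
    (hL : {g : G | ∃ w : List (A ⊕ A), (∃ t ∈ T, IsPath (E : Set (Q × (A ⊕ A) × Q)) q₀ w t) ∧
      φ (FreeMonoid.ofList w) = g} = Set.univ) :
    (∃ B : Finset G, B.card ≤ E.card ∧ Subgroup.closure (B : Set G) = ⊤) ∧
    ((∀ q : Q, ∃ w₁ w₂ : List (A ⊕ A), ∃ t ∈ T,
        IsPath (E : Set (Q × (A ⊕ A) × Q)) q₀ w₁ q ∧
        IsPath (E : Set (Q × (A ⊕ A) × Q)) q w₂ t) →
      ∃ B : Finset G,
        (B.card : ℤ) ≤ (E.card : ℤ) - (Fintype.card Q : ℤ) + ((insert q₀ T).card : ℤ) ∧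
        Subgroup.closure (B : Set G) = ⊤) := by
  classical
  set ES : Set (Q × (A ⊕ A) × Q) := (E : Set (Q × (A ⊕ A) × Q)) with hES
  set f : List (A ⊕ A) → G := fun w => φ (FreeMonoid.ofList w) with hfdef
  have hf_app : ∀ w₁ w₂ : List (A ⊕ A), f (w₁ ++ w₂) = f w₁ * f w₂ := by
    intro w₁ w₂; simp [hfdef, FreeMonoid.ofList_append, map_mul]
  have hf_nil : f [] = 1 := by simp [hfdef, FreeMonoid.ofList_nil]
  set tw : Q → List (A ⊕ A) := treeWord ES q₀ with htwdef
  set Acc : Finset Q := Finset.univ.filter (fun q => Accessible ES q₀ q) with hAccdef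
  set D : Finset Q := Acc.erase q₀ with hDdef
  have hmemD : ∀ q ∈ D, Accessible ES q₀ q ∧ q ≠ q₀ := by
    intro q hq
    rw [hDdef, Finset.mem_erase, hAccdef, Finset.mem_filter] at hq
    exact ⟨hq.2.2, hq.1⟩
  set te : {q // q ∈ D} → Q × (A ⊕ A) × Q := fun q =>
    ((tePair ES q₀ (hmemD q q.2).1 (hmemD q q.2).2).1,
     (tePair ES q₀ (hmemD q q.2).1 (hmemD q q.2).2).2, q.1) with htedef
  set TE : Finset (Q × (A ⊕ A) × Q) := D.attach.image te with hTEdef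
  have hteinj : Function.Injective te := by
    intro a b hab
    have : a.1 = b.1 := congrArg (fun e => e.2.2) hab
    exact Subtype.ext this
  have hTEcard : TE.card = D.card := by
    rw [hTEdef, Finset.card_image_of_injective _ hteinj, Finset.card_attach]
  have hTEsub : TE ⊆ E := by
    intro e he
    rw [hTEdef, Finset.mem_image] at he
    obtain ⟨q, hq, rfl⟩ := he
    exact tePair_mem ES q₀ (hmemD q q.2).1 (hmemD q q.2).2
  set b : Q × (A ⊕ A) × Q → G :=
    fun e => f (tw e.1) * φ (FreeMonoid.of e.2.1) * (f (tw e.2.2))⁻¹ with hbdef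
  set B : Finset G := ((E \ TE).filter (fun e => Accessible ES q₀ e.1)).image b ∪
      (D ∩ T).image (fun t => f (tw t)) with hBdef
  have key : ∀ (w : List (A ⊕ A)) (p r : Q), Accessible ES q₀ p → IsPath ES p w r →
      f (tw p) * f w * (f (tw r))⁻¹ ∈ Subgroup.closure (B : Set G) := by
    intro w
    induction w with
    | nil =>
      intro p r hp hpr
      have hpr' : p = r := hpr
      subst hpr'
      have : f (tw p) * f [] * (f (tw p))⁻¹ = 1 := by rw [hf_nil]; group
      rw [this]; exact one_mem _
    | cons x w ih =>
      intro p r hp hpr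
      obtain ⟨s, he, hw⟩ := hpr
      have hs : Accessible ES q₀ s := by
        obtain ⟨wp, hwp⟩ := hp
        exact ⟨wp ++ [x], (isPath_append ES).2 ⟨p, hwp, ⟨s, he, rfl⟩⟩⟩
      have h1 : f (tw p) * φ (FreeMonoid.of x) * (f (tw s))⁻¹ ∈
          Subgroup.closure (B : Set G) := by
        by_cases hTE : (p, x, s) ∈ TE
        · rw [hTEdef, Finset.mem_image] at hTE
          obtain ⟨q, hq, hqe⟩ := hTE
          have h3 : q.1 = s := congrArg (fun e => e.2.2) hqe
          have hw' : tw q.1 = tw (tePair ES q₀ (hmemD q q.2).1 (hmemD q q.2).2).1 ++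
              [(tePair ES q₀ (hmemD q q.2).1 (hmemD q q.2).2).2] :=
            treeWord_spec ES q₀ (hmemD q q.2).1 (hmemD q q.2).2
          have hpe : (tePair ES q₀ (hmemD q q.2).1 (hmemD q q.2).2).1 = p :=
            congrArg (fun e => e.1) hqe
          have hxe : (tePair ES q₀ (hmemD q q.2).1 (hmemD q q.2).2).2 = x :=
            congrArg (fun e => e.2.1) hqe
          rw [hpe, hxe] at hw'
          rw [h3] at hw'
          have hfs : f (tw s) = f (tw p) * φ (FreeMonoid.of x) := by
            rw [hw', hf_app]
            simp [hfdef, FreeMonoid.ofList_singleton]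
          rw [hfs]
          have : f (tw p) * φ (FreeMonoid.of x) *
              (f (tw p) * φ (FreeMonoid.of x))⁻¹ = 1 := by group
          rw [this]; exact one_mem _
        · have hmem : (p, x, s) ∈ (E \ TE).filter (fun e => Accessible ES q₀ e.1) := by
            rw [Finset.mem_filter, Finset.mem_sdiff]
            exact ⟨⟨he, hTE⟩, hp⟩
          exact Subgroup.subset_closure
            (Finset.mem_union_left _ (Finset.mem_image_of_mem b hmem))
      have h2 := ih s r hs hw
      have heq : f (tw p) * f (x :: w) * (f (tw r))⁻¹ =
          (f (tw p) * φ (FreeMonoid.of x) * (f (tw s))⁻¹) *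
          (f (tw s) * f w * (f (tw r))⁻¹) := by
        have : f (x :: w) = φ (FreeMonoid.of x) * f w := by
          simp [hfdef, FreeMonoid.ofList_cons]
        rw [this]; group
      rw [heq]; exact mul_mem h1 h2
  have hclose : Subgroup.closure (B : Set G) = ⊤ := by
    rw [Subgroup.eq_top_iff']
    intro g
    have hg : ∃ w : List (A ⊕ A), (∃ t ∈ T, IsPath ES q₀ w t) ∧
        φ (FreeMonoid.ofList w) = g := Set.eq_univ_iff_forall.mp hL g
    obtain ⟨w, ⟨t, ht, hpath⟩, hfw⟩ := hg
    have hq0acc : Accessible ES q₀ q₀ := ⟨[], rfl⟩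
    have hk := key w q₀ t hq0acc hpath
    have htw0 : tw q₀ = [] := treeWord_q₀ ES q₀
    have hfwf : f w = g := hfw
    rw [htw0, hf_nil, one_mul, hfwf] at hk
    have htacc : Accessible ES q₀ t := ⟨w, hpath⟩
    have htw : f (tw t) ∈ Subgroup.closure (B : Set G) := by
      by_cases h2 : t = q₀
      · subst h2; rw [htw0, hf_nil]; exact one_mem _
      · have htD : t ∈ D ∩ T := by
          rw [Finset.mem_inter, hDdef, Finset.mem_erase, hAccdef, Finset.mem_filter]
          exact ⟨⟨h2, Finset.mem_univ t, htacc⟩, ht⟩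
        exact Subgroup.subset_closure
          (Finset.mem_union_right _ (Finset.mem_image_of_mem _ htD))
    have hgeq : g = (g * (f (tw t))⁻¹) * f (tw t) := by group
    rw [hgeq]; exact mul_mem hk htw
  have hBcard : B.card ≤ (E \ TE).card + (D ∩ T).card :=
    le_trans (Finset.card_union_le _ _)
      (add_le_add (Finset.card_image_le.trans (Finset.card_filter_le _ _))
        Finset.card_image_le)
  have hsd : (E \ TE).card = E.card - D.card := by
    rw [Finset.card_sdiff_of_subset hTEsub, hTEcard]
  have hDle : D.card ≤ E.card := hTEcard ▸ Finset.card_le_card hTEsub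
  constructor
  · refine ⟨B, ?_, hclose⟩
    have h1 : (D ∩ T).card ≤ D.card := Finset.card_le_card Finset.inter_subset_left
    omega
  · intro htrim
    refine ⟨B, ?_, hclose⟩
    have hAcc : Acc = Finset.univ := by
      rw [hAccdef]
      ext q
      simp only [Finset.mem_filter, Finset.mem_univ, true_and, iff_true]
      obtain ⟨w₁, w₂, t, ht, h1, h2⟩ := htrim q
      exact ⟨w₁, h1⟩
    have hq0mem : q₀ ∈ Acc := by rw [hAcc]; exact Finset.mem_univ q₀
    have hDcard : D.card = Fintype.card Q - 1 := by
      rw [hDdef, Finset.card_erase_of_mem hq0mem, hAcc, Finset.card_univ]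
    have hQpos : 1 ≤ Fintype.card Q := Fintype.card_pos_iff.mpr ⟨q₀⟩
    have hDT : D ∩ T = T.erase q₀ := by
      ext q
      rw [Finset.mem_inter, hDdef, Finset.mem_erase, Finset.mem_erase]
      constructor
      · rintro ⟨⟨h1, _⟩, h2⟩; exact ⟨h1, h2⟩
      · rintro ⟨h1, h2⟩
        refine ⟨⟨h1, ?_⟩, h2⟩
        rw [hAcc]; exact Finset.mem_univ q
    have hins : (insert q₀ T).card = (T.erase q₀).card + 1 := by
      have h1 : insert q₀ T = insert q₀ (T.erase q₀) := by
        ext q; simp only [Finset.mem_insert, Finset.mem_erase]; tauto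
      rw [h1, Finset.card_insert_of_notMem (Finset.notMem_erase _ _)]
    rw [hDT] at hBcard
    omega
end

section
/- Let S = M[G; I, Λ; P] be a Rees matrix semigroup over a group G, let T be a CS-subalgebra of S, and let i ∈ I and λ ∈ Λ be such that T meets {i} × G × Λ and T meets I × G × {λ}. Then: (i) T^{(iλ)} := T ∩ ({i} × G × {λ}) is nonempty and is a group under the induced multiplication, and the set G^{(iλ)} := { g · P(λ,i) : (i, g, λ) ∈ T } is a subgroup of G isomorphic to T^{(iλ)} via (i, g, λ) ↦ g · P(λ,i); and (ii) if T is generated as a CS-subalgebra by n elements, then G^{(iλ)} is generated as a group by at most n² + 1 elements. -/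
section Rees

variable {G I Λ : Type*} [Group G]

/-- Multiplication of the Rees matrix semigroup `M[G; I, Λ; P]`:
`(i, g, λ)(j, h, μ) = (i, g · P(λ, j) · h, μ)`. -/
def reesMul (P : Λ × I → G) (x y : I × G × Λ) : I × G × Λ :=
  (x.1, x.2.1 * P (x.2.2, y.1) * y.2.1, y.2.2)

/-- The completely-regular unary operation on `M[G; I, Λ; P]`:
`(i, g, λ) ↦ (i, P(λ,i)⁻¹ g⁻¹ P(λ,i)⁻¹, λ)`. -/
def reesBar (P : Λ × I → G) (x : I × G × Λ) : I × G × Λ :=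
  (x.1, (P (x.2.2, x.1))⁻¹ * x.2.1⁻¹ * (P (x.2.2, x.1))⁻¹, x.2.2)

/-- A subset closed under the Rees multiplication and the unary operation. -/
def ReesClosed (P : Λ × I → G) (T : Set (I × G × Λ)) : Prop :=
  (∀ x ∈ T, ∀ y ∈ T, reesMul P x y ∈ T) ∧ (∀ x ∈ T, reesBar P x ∈ T)

/-- The CS-subalgebra generated by a subset: the smallest subset containing it
that is closed under multiplication and the unary operation. -/
def reesClosure (P : Λ × I → G) (A : Set (I × G × Λ)) : Set (I × G × Λ) :=
  ⋂₀ {T : Set (I × G × Λ) | A ⊆ T ∧ ReesClosed P T}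

end Rees

section Helpers

variable {G I Λ : Type*} [Group G]

/-- The `n²` basic generators. -/
def reesY (P : Λ × I → G) (d : G) (l : Λ) (a b : I × G × Λ) : G :=
  d * P (l, a.1) * a.2.1 * P (a.2.2, b.1) * (P (l, b.1))⁻¹ * d⁻¹

lemma rees_exists_il (P : Λ × I → G) {T : Set (I × G × Λ)}
    (hclosed : ReesClosed P T) {i : I} {l : Λ}
    (hi : ∃ x ∈ T, x.1 = i) (hl : ∃ x ∈ T, x.2.2 = l) :
    ∃ g : G, (i, g, l) ∈ T := by
  obtain ⟨x, hx, hx1⟩ := hi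
  obtain ⟨y, hy, hy2⟩ := hl
  refine ⟨(reesMul P x y).2.1, ?_⟩
  have h := hclosed.1 x hx y hy
  have e : (i, (reesMul P x y).2.1, l) = reesMul P x y := by
    simp [reesMul, hx1, hy2]
  rw [e]; exact h

lemma rees_w_mem (P : Λ × I → G) {T : Set (I × G × Λ)}
    (hclosed : ReesClosed P T) {i : I} {l : Λ} {d : G}
    (hd : (i, d, l) ∈ T) {s : I × G × Λ} (hs : s ∈ T) (hs2 : s.2.2 = l) :
    (s.1, (P (l, s.1))⁻¹ * d⁻¹ * (P (l, i))⁻¹, l) ∈ T := by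
  obtain ⟨j, g, μ⟩ := s
  simp only at hs2
  subst hs2
  have h2 := hclosed.1 _ (hclosed.1 _ (hclosed.2 _ hs) _ hs) _ (hclosed.2 _ hd)
  have e : reesMul P (reesMul P (reesBar P (j, g, μ)) (j, g, μ)) (reesBar P (i, d, μ))
      = (j, (P (μ, j))⁻¹ * d⁻¹ * (P (μ, i))⁻¹, μ) := by
    simp only [reesMul, reesBar, Prod.mk.injEq, true_and, and_true]
    group
  rw [e] at h2
  exact h2

lemma rees_exists_K (P : Λ × I → G) {T : Set (I × G × Λ)}
    (hclosed : ReesClosed P T) {i : I} {l : Λ}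
    (hpinv : (i, (P (l, i))⁻¹, l) ∈ T) :
    ∃ K : Subgroup G,
      (K : Set G) = {h : G | ∃ g : G, (i, g, l) ∈ T ∧ h = g * P (l, i)} := by
  refine ⟨{ carrier := {h : G | ∃ g : G, (i, g, l) ∈ T ∧ h = g * P (l, i)}
            one_mem' := ⟨(P (l, i))⁻¹, hpinv, by group⟩
            mul_mem' := ?_
            inv_mem' := ?_ }, rfl⟩
  · rintro a b ⟨g, hg, rfl⟩ ⟨h, hh, rfl⟩
    exact ⟨g * P (l, i) * h, hclosed.1 _ hg _ hh, by group⟩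
  · rintro a ⟨g, hg, rfl⟩
    exact ⟨(P (l, i))⁻¹ * g⁻¹ * (P (l, i))⁻¹, hclosed.2 _ hg, by group⟩

end Helpers

/-- let `S = M[G; I, Λ; P]` be a Rees matrix semigroup over a
group `G`, let `T` be a CS-subalgebra of `S` (a nonempty subset closed under
multiplication and the unary operation), and let `i ∈ I`, `λ' ∈ Λ` be such that
`T` meets `{i} × G × Λ` and `I × G × {λ'}`. Then:
(i) `T^{(iλ)} = T ∩ ({i} × G × {λ'})` is nonempty and a group under the
induced multiplication, and `G^{(iλ)} = { g·P(λ',i) : (i,g,λ') ∈ T }` is a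
subgroup of `G`, isomorphic to `T^{(iλ)}` via `(i,g,λ') ↦ g·P(λ',i)` (an
injective multiplication-preserving bijection onto `G^{(iλ)}`);
(ii) if `T` is generated as a CS-subalgebra by at most `n` elements, then
`G^{(iλ)}` is generated as a group by at most `n² + 1` elements. -/
theorem stmt_11 {G I Λ : Type*} [Group G] [Nonempty I] [Nonempty Λ]
    (P : Λ × I → G) (T : Set (I × G × Λ))
    (hne : T.Nonempty) (hclosed : ReesClosed P T)
    (i : I) (l : Λ)
    (hi : ∃ x ∈ T, x.1 = i) (hl : ∃ x ∈ T, x.2.2 = l) :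
    -- (i)
    ((∃ g : G, (i, g, l) ∈ T) ∧
     -- T^{(iλ)} is closed under the induced multiplication
     (∀ g h : G, (i, g, l) ∈ T → (i, h, l) ∈ T →
        reesMul P (i, g, l) (i, h, l) ∈ T ∧
        reesMul P (i, g, l) (i, h, l) = (i, g * P (l, i) * h, l)) ∧
     -- T^{(iλ)} is a group under the induced multiplication
     (∃ e : G, (i, e, l) ∈ T ∧
        (∀ g : G, (i, g, l) ∈ T →
          reesMul P (i, e, l) (i, g, l) = (i, g, l) ∧
          reesMul P (i, g, l) (i, e, l) = (i, g, l)) ∧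
        (∀ g : G, (i, g, l) ∈ T → ∃ h : G, (i, h, l) ∈ T ∧
          reesMul P (i, g, l) (i, h, l) = (i, e, l) ∧
          reesMul P (i, h, l) (i, g, l) = (i, e, l))) ∧
     -- G^{(iλ)} is a subgroup of G, and (i,g,λ') ↦ g·P(λ',i) is an
     -- injective multiplicative map from T^{(iλ)} onto it
     (∃ K : Subgroup G,
        (K : Set G) = {h : G | ∃ g : G, (i, g, l) ∈ T ∧ h = g * P (l, i)} ∧
        (∀ g h : G, (i, g, l) ∈ T → (i, h, l) ∈ T →
          ((reesMul P (i, g, l) (i, h, l)).2.1) * P (l, i) =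
            (g * P (l, i)) * (h * P (l, i))) ∧
        (∀ g h : G, (i, g, l) ∈ T → (i, h, l) ∈ T →
          g * P (l, i) = h * P (l, i) → g = h))) ∧
    -- (ii)
    (∀ (n : ℕ) (A : Finset (I × G × Λ)), A.card ≤ n →
       reesClosure P (A : Set (I × G × Λ)) = T →
       ∃ B : Finset G, B.card ≤ n ^ 2 + 1 ∧
         (Subgroup.closure (B : Set G) : Set G) =
           {h : G | ∃ g : G, (i, g, l) ∈ T ∧ h = g * P (l, i)}) := by
  classical
  obtain ⟨d, hd⟩ : ∃ g : G, (i, g, l) ∈ T := rees_exists_il P hclosed hi hl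
  -- the identity element of the H-class group
  have hpinv : (i, (P (l, i))⁻¹, l) ∈ T := by
    have h1 := hclosed.1 _ (hclosed.2 _ hd) _ hd
    have e : reesMul P (reesBar P (i, d, l)) (i, d, l) = (i, (P (l, i))⁻¹, l) := by
      simp only [reesMul, reesBar, Prod.mk.injEq, true_and, and_true]
      group
    rw [e] at h1; exact h1
  obtain ⟨K, hK⟩ := rees_exists_K P hclosed hpinv
  constructor
  · -- part (i)
    refine ⟨⟨d, hd⟩, ?_, ?_, ?_⟩
    · intro g h hg hh
      exact ⟨hclosed.1 _ hg _ hh, rfl⟩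
    · refine ⟨(P (l, i))⁻¹, hpinv, ?_, ?_⟩
      · intro g hg
        constructor <;>
          · simp only [reesMul, Prod.mk.injEq, true_and, and_true]
            group
      · intro g hg
        refine ⟨(P (l, i))⁻¹ * g⁻¹ * (P (l, i))⁻¹, hclosed.2 _ hg, ?_, ?_⟩ <;>
          · simp only [reesMul, Prod.mk.injEq, true_and, and_true]
            group
    · refine ⟨K, hK, ?_, ?_⟩
      · intro g h _ _
        simp only [reesMul]
        group
      · intro g h _ _ hgh
        exact mul_right_cancel hgh
  · -- part (ii)
    intro n A hcard hgen
    have hAT : (A : Set (I × G × Λ)) ⊆ T := by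
      rw [← hgen]
      intro x hx
      exact Set.mem_sInter.mpr fun T' hT' => hT'.1 hx
    have hmin : ∀ U : Set (I × G × Λ), (A : Set (I × G × Λ)) ⊆ U → ReesClosed P U →
        T ⊆ U := by
      intro U hAU hU x hx
      rw [← hgen] at hx
      exact Set.mem_sInter.mp hx U ⟨hAU, hU⟩
    set B : Finset G :=
      insert (d * P (l, i)) ((A ×ˢ A).image fun ab => reesY P d l ab.1 ab.2) with hB
    set N : Subgroup G := Subgroup.closure (B : Set G) with hN
    -- generator memberships in N
    have hB1 : d * P (l, i) ∈ N :=
      Subgroup.subset_closure (by simp [hB])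
    have hBy : ∀ a ∈ A, ∀ b ∈ A, reesY P d l a b ∈ N := by
      intro a ha b hb
      refine Subgroup.subset_closure ?_
      simp only [hB, Finset.coe_insert, Set.mem_insert_iff, Finset.coe_image,
        Set.mem_image, Finset.mem_coe, Finset.mem_product]
      exact Or.inr ⟨(a, b), by exact ⟨ha, hb⟩, rfl⟩
    refine ⟨B, ?_, ?_⟩
    · calc B.card ≤ ((A ×ˢ A).image fun ab => reesY P d l ab.1 ab.2).card + 1 :=
            Finset.card_insert_le _ _
        _ ≤ (A ×ˢ A).card + 1 := Nat.add_le_add_right Finset.card_image_le 1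
        _ = A.card * A.card + 1 := by rw [Finset.card_product]
        _ ≤ n ^ 2 + 1 := by
            have := Nat.mul_le_mul hcard hcard
            nlinarith
    · apply Set.Subset.antisymm
      · -- closure B ⊆ K
        rw [← hK]
        refine (Subgroup.closure_le K).mpr ?_
        intro z hz
        simp only [hB, Finset.coe_insert, Set.mem_insert_iff, Finset.coe_image,
          Set.mem_image, Finset.mem_coe, Finset.mem_product] at hz
        rw [SetLike.mem_coe, ← SetLike.mem_coe, hK]
        rcases hz with rfl | ⟨⟨a, b⟩, ⟨ha, hb⟩, rfl⟩
        · exact ⟨d, hd, rfl⟩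
        · -- reesY a b lies in the H-class group image
          obtain ⟨z, hzT, hz2⟩ := hl
          have hbz : reesMul P b z ∈ T := hclosed.1 _ (hAT hb) _ hzT
          have hw := rees_w_mem P hclosed hd hbz (by simp [reesMul, hz2])
          have ht : reesMul P (reesMul P (i, d, l) a) ((reesMul P b z).1,
              (P (l, (reesMul P b z).1))⁻¹ * d⁻¹ * (P (l, i))⁻¹, l) ∈ T :=
            hclosed.1 _ (hclosed.1 _ hd _ (hAT ha)) _ hw
          have e1 : (reesMul P b z).1 = b.1 := rfl
          rw [e1] at ht
          refine ⟨d * P (l, a.1) * a.2.1 * P (a.2.2, b.1) *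
            ((P (l, b.1))⁻¹ * d⁻¹ * (P (l, i))⁻¹), ht, ?_⟩
          simp only [reesY]
          group
      · -- K ⊆ closure B : via the invariant set U
        set U : Set (I × G × Λ) :=
          {x | (∃ a ∈ A, a.1 = x.1) ∧ (∃ a ∈ A, a.2.2 = x.2.2) ∧
            ∀ a ∈ A, a.2.2 = x.2.2 →
              d * P (l, x.1) * x.2.1 * a.2.1⁻¹ * (P (l, a.1))⁻¹ * d⁻¹ ∈ N} with hU
        have hAU : (A : Set (I × G × Λ)) ⊆ U := by
          intro a' ha'
          refine ⟨⟨a', ha', rfl⟩, ⟨a', ha', rfl⟩, ?_⟩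
          intro a ha hμ
          have e : d * P (l, a'.1) * a'.2.1 * a.2.1⁻¹ * (P (l, a.1))⁻¹ * d⁻¹
              = reesY P d l a' a * (reesY P d l a a)⁻¹ := by
            simp only [reesY, hμ]
            group
          rw [e]
          exact mul_mem (hBy a' ha' a ha) (inv_mem (hBy a ha a ha))
        have hUclosed : ReesClosed P U := by
          constructor
          · rintro x ⟨⟨bx, hbx, hbx1⟩, ⟨ax, hax, haxμ⟩, hCx⟩
              y ⟨⟨by', hby, hby1⟩, ⟨ay, hay, hayμ⟩, hCy⟩
            refine ⟨⟨bx, hbx, hbx1⟩, ⟨ay, hay, hayμ⟩, ?_⟩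
            intro a ha hμ
            have e : d * P (l, (reesMul P x y).1) * (reesMul P x y).2.1 * a.2.1⁻¹ *
                (P (l, a.1))⁻¹ * d⁻¹
                = (d * P (l, x.1) * x.2.1 * ax.2.1⁻¹ * (P (l, ax.1))⁻¹ * d⁻¹) *
                  reesY P d l ax by' *
                  (d * P (l, y.1) * y.2.1 * a.2.1⁻¹ * (P (l, a.1))⁻¹ * d⁻¹) := by
              simp only [reesY, reesMul, haxμ, hby1]
              group
            rw [e]
            exact mul_mem (mul_mem (hCx ax hax haxμ) (hBy ax hax by' hby))
              (hCy a ha (hμ.trans rfl))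
          · rintro x ⟨⟨bx, hbx, hbx1⟩, ⟨ax, hax, haxμ⟩, hCx⟩
            refine ⟨⟨bx, hbx, hbx1⟩, ⟨ax, hax, haxμ⟩, ?_⟩
            intro a ha hμ
            have hμ' : a.2.2 = x.2.2 := hμ
            have e : d * P (l, (reesBar P x).1) * (reesBar P x).2.1 * a.2.1⁻¹ *
                (P (l, a.1))⁻¹ * d⁻¹
                = (reesY P d l a bx)⁻¹ *
                  (d * P (l, x.1) * x.2.1 * a.2.1⁻¹ * (P (l, a.1))⁻¹ * d⁻¹)⁻¹ *
                  (reesY P d l a bx)⁻¹ := by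
              simp only [reesY, reesBar, hμ', hbx1]
              group
            rw [e]
            exact mul_mem (mul_mem (inv_mem (hBy a ha bx hbx))
              (inv_mem (hCx a ha hμ'))) (inv_mem (hBy a ha bx hbx))
        rintro h ⟨g, hg, rfl⟩
        obtain ⟨⟨b, hb, hb1⟩, ⟨a, ha, ha2⟩, hC⟩ := hmin U hAU hUclosed hg
        have hCa := hC a ha ha2
        have e : g * P (l, i) = (d * P (l, i))⁻¹ *
            (d * P (l, i) * g * a.2.1⁻¹ * (P (l, a.1))⁻¹ * d⁻¹) *
            reesY P d l a b * (d * P (l, i)) := by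
          simp only [reesY, ha2, hb1]
          group
        rw [e]
        exact mul_mem (mul_mem (mul_mem (inv_mem hB1) hCa) (hBy a ha b hb)) hB1
end

section
/- Let S = M[G; I, Λ; P] be a Rees matrix semigroup over a group G. Then S belongs to Tak(𝒞𝒮) — that is, every ascending chain of CS-subalgebras of S of bounded CS-rank is stationary — if and only if G is a Takahasi group. -/
section Rees

variable {G I Λ : Type*} [Group G]

/-- A CS-subalgebra of `M[G; I, Λ; P]`: a nonempty subset closed under
multiplication and the unary operation. -/
def IsReesCS (P : Λ × I → G) (T : Set (I × G × Λ)) : Prop :=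
  T.Nonempty ∧ ReesClosed P T

end Rees

/-! A CS-subalgebra `T` of `M[G; I, Λ; P]` with a cell `(i₀, l₀)` among its rows and columns
contains every idempotent of its rows × columns, hence, in coordinates normalized at
`(i₀, l₀)`, it is `rows T × K × cols T` for the subgroup `K` carried by that cell.
If `T` is generated by `A`, then `K` is generated by the coordinates of `A` together with the
normalized sandwich entries over `cols A × rows A`, so CS-rank `r` gives group rank at most
`r + r²`. In a chain of bounded CS-rank the rows and columns are sets of bounded size, so they
stabilize, and from then on the chain is governed by a chain of subgroups of bounded rank.
Conversely `G` is the cell `(i₀, l₀)`, and a subgroup of rank `r` becomes a CS-subalgebra of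
CS-rank at most `r + 1` (the identity is added, since `reesClosure ∅ = ∅`). -/

lemma Set.exists_forall_ge_eq_of_monotone_of_ncard_le {α : Type*} {s : ℕ → Set α}
    (hs : Monotone s) (hfin : ∀ n, (s n).Finite) {M : ℕ} (hM : ∀ n, (s n).ncard ≤ M) :
    ∃ N, ∀ n, N ≤ n → s n = s N := by
  let card : ℕ →o Fin (M + 1) :=
    ⟨fun n => ⟨(s n).ncard, Nat.lt_succ_of_le (hM n)⟩,
      fun _ n h => Fin.mk_le_mk.2 (Set.ncard_le_ncard (hs h) (hfin n))⟩
  obtain ⟨N, hN⟩ := WellFoundedGT.monotone_chain_condition card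
  refine ⟨N, fun n hn => (Set.eq_of_subset_of_ncard_le (hs hn) ?_ (hfin n)).symm⟩
  exact (Fin.mk.inj_iff.1 (hN n hn)).ge

def IsTakahasiGroup (G : Type*) [Group G] : Prop :=
  ∀ (M : ℕ) (H : ℕ → Subgroup G), Monotone H →
    (∀ n, ∃ A : Finset G, A.card ≤ M ∧ Subgroup.closure (A : Set G) = H n) →
    ∃ p, ∀ n, p ≤ n → H n = H p

namespace ReesMatrix

variable {G I Λ : Type*} [Group G] (P : Λ × I → G)

def rows (T : Set (I × G × Λ)) : Set I := Prod.fst '' T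

def cols (T : Set (I × G × Λ)) : Set Λ := (fun x => x.2.2) '' T

section Closure

variable {P}

lemma subset_reesClosure (A : Set (I × G × Λ)) : A ⊆ reesClosure P A :=
  fun _ hx => Set.mem_sInter.2 fun _ hT => hT.1 hx

lemma reesClosure_subset {A T : Set (I × G × Λ)} (hAT : A ⊆ T) (hT : ReesClosed P T) :
    reesClosure P A ⊆ T :=
  Set.sInter_subset_of_mem ⟨hAT, hT⟩

lemma reesClosed_reesClosure (A : Set (I × G × Λ)) : ReesClosed P (reesClosure P A) :=
  ⟨fun _ hx _ hy => Set.mem_sInter.2 fun T hT =>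
      hT.2.1 _ (Set.mem_sInter.1 hx T hT) _ (Set.mem_sInter.1 hy T hT),
    fun _ hx => Set.mem_sInter.2 fun T hT => hT.2.2 _ (Set.mem_sInter.1 hx T hT)⟩

lemma reesClosure_subset_rows_cols (A : Set (I × G × Λ)) :
    reesClosure P A ⊆ {x | x.1 ∈ rows A ∧ x.2.2 ∈ cols A} :=
  reesClosure_subset (fun x hx => ⟨⟨x, hx, rfl⟩, ⟨x, hx, rfl⟩⟩)
    ⟨fun _ hx _ hy => ⟨hx.1, hy.2⟩, fun _ hx => hx⟩

lemma rows_reesClosure (A : Set (I × G × Λ)) : rows (reesClosure P A) = rows A :=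
  subset_antisymm (by rintro _ ⟨x, hx, rfl⟩; exact (reesClosure_subset_rows_cols A hx).1)
    (Set.image_mono (subset_reesClosure A))

lemma cols_reesClosure (A : Set (I × G × Λ)) : cols (reesClosure P A) = cols A :=
  subset_antisymm (by rintro _ ⟨x, hx, rfl⟩; exact (reesClosure_subset_rows_cols A hx).2)
    (Set.image_mono (subset_reesClosure A))

lemma idempotent_mem {T : Set (I × G × Λ)} (hT : ReesClosed P T) {i : I} {l : Λ}
    (hi : i ∈ rows T) (hl : l ∈ cols T) : (i, (P (l, i))⁻¹, l) ∈ T := by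
  obtain ⟨x, hx, rfl⟩ := hi
  obtain ⟨y, hy, rfl⟩ := hl
  have hxy := hT.1 x hx y hy
  convert hT.1 _ hxy _ (hT.2 _ hxy) using 1
  simp only [reesMul, reesBar, Prod.mk.injEq, true_and, and_true]
  group

end Closure

/- Coordinates normalized at the cell `(i₀, l₀)`: in them the multiplication reads
`(i, a, l)(j, b, m) = (i, a * normSandwich l j * b, m)`, and `normSandwich` is trivial on
row `l₀` and column `i₀`. -/

variable (i₀ : I) (l₀ : Λ)

def coord (x : I × G × Λ) : G := (P (l₀, i₀))⁻¹ * P (l₀, x.1) * x.2.1 * P (x.2.2, i₀)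

def ofCoord (i : I) (a : G) (l : Λ) : I × G × Λ :=
  (i, (P (l₀, i))⁻¹ * P (l₀, i₀) * a * (P (l, i₀))⁻¹, l)

def normSandwich (l : Λ) (i : I) : G :=
  (P (l, i₀))⁻¹ * P (l, i) * (P (l₀, i))⁻¹ * P (l₀, i₀)

variable {P i₀ l₀}

@[simp]
lemma coord_ofCoord (i : I) (a : G) (l : Λ) :
    coord P i₀ l₀ (ofCoord P i₀ l₀ i a l) = a := by
  simp only [coord, ofCoord]; group

lemma ofCoord_coord (x : I × G × Λ) :
    ofCoord P i₀ l₀ x.1 (coord P i₀ l₀ x) x.2.2 = x := by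
  simp only [coord, ofCoord]; ext <;> simp only; group

lemma ofCoord_injective (i : I) (l : Λ) : Function.Injective fun a => ofCoord P i₀ l₀ i a l :=
  fun a b h => by simpa using congrArg (coord P i₀ l₀) h

lemma coord_reesMul (x y : I × G × Λ) :
    coord P i₀ l₀ (reesMul P x y) =
      coord P i₀ l₀ x * normSandwich P i₀ l₀ x.2.2 y.1 * coord P i₀ l₀ y := by
  simp only [coord, reesMul, normSandwich]; group

lemma coord_reesBar (x : I × G × Λ) :
    coord P i₀ l₀ (reesBar P x) =
      (normSandwich P i₀ l₀ x.2.2 x.1)⁻¹ * (coord P i₀ l₀ x)⁻¹ *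
        (normSandwich P i₀ l₀ x.2.2 x.1)⁻¹ := by
  simp only [coord, reesBar, normSandwich]; group

lemma reesMul_ofCoord_base (a b : G) :
    reesMul P (ofCoord P i₀ l₀ i₀ a l₀) (ofCoord P i₀ l₀ i₀ b l₀) =
      ofCoord P i₀ l₀ i₀ (a * b) l₀ := by
  simp only [reesMul, ofCoord, Prod.mk.injEq, true_and, and_true]; group

lemma reesBar_ofCoord_base (a : G) :
    reesBar P (ofCoord P i₀ l₀ i₀ a l₀) = ofCoord P i₀ l₀ i₀ a⁻¹ l₀ := by
  simp only [reesBar, ofCoord, Prod.mk.injEq, true_and, and_true]; group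

lemma reesMul_ofCoord_one_col_row (l : Λ) (i : I) :
    reesMul P (ofCoord P i₀ l₀ i₀ 1 l) (ofCoord P i₀ l₀ i 1 l₀) =
      ofCoord P i₀ l₀ i₀ (normSandwich P i₀ l₀ l i) l₀ := by
  simp only [reesMul, ofCoord, normSandwich, Prod.mk.injEq, true_and, and_true]; group

lemma base_mul_mul_base (x : I × G × Λ) :
    reesMul P (reesMul P (ofCoord P i₀ l₀ i₀ 1 l₀) x) (ofCoord P i₀ l₀ i₀ 1 l₀) =
      ofCoord P i₀ l₀ i₀ (coord P i₀ l₀ x) l₀ := by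
  simp only [reesMul, ofCoord, coord, Prod.mk.injEq, true_and, and_true]; group

lemma row_mul_base_mul_col (i : I) (a : G) (l : Λ) :
    reesMul P (reesMul P (ofCoord P i₀ l₀ i 1 l₀) (ofCoord P i₀ l₀ i₀ a l₀))
        (ofCoord P i₀ l₀ i₀ 1 l) =
      ofCoord P i₀ l₀ i a l := by
  simp only [reesMul, ofCoord, Prod.mk.injEq, true_and, and_true]; group

section Subalgebra

variable {T : Set (I × G × Λ)}

lemma ofCoord_one_mem_of_mem_rows (hT : ReesClosed P T) {i : I} (hi : i ∈ rows T)
    (hl₀ : l₀ ∈ cols T) : ofCoord P i₀ l₀ i 1 l₀ ∈ T := by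
  convert idempotent_mem hT hi hl₀ using 1
  simp only [ofCoord, Prod.mk.injEq, true_and, and_true]; group

lemma ofCoord_one_mem_of_mem_cols (hT : ReesClosed P T) {l : Λ} (hi₀ : i₀ ∈ rows T)
    (hl : l ∈ cols T) : ofCoord P i₀ l₀ i₀ 1 l ∈ T := by
  convert idempotent_mem hT hi₀ hl using 1
  simp only [ofCoord, Prod.mk.injEq, true_and, and_true]; group

lemma mem_iff_ofCoord_coord_mem (hT : ReesClosed P T) (hi₀ : i₀ ∈ rows T)
    (hl₀ : l₀ ∈ cols T) {x : I × G × Λ} :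
    x ∈ T ↔
      x.1 ∈ rows T ∧ x.2.2 ∈ cols T ∧ ofCoord P i₀ l₀ i₀ (coord P i₀ l₀ x) l₀ ∈ T := by
  have he₀ := ofCoord_one_mem_of_mem_rows (i₀ := i₀) hT hi₀ hl₀
  refine ⟨fun hx => ⟨⟨x, hx, rfl⟩, ⟨x, hx, rfl⟩, ?_⟩, fun ⟨hi, hl, hx⟩ => ?_⟩
  · rw [← base_mul_mul_base]
    exact hT.1 _ (hT.1 _ he₀ _ hx) _ he₀
  · rw [← ofCoord_coord x, ← row_mul_base_mul_col]
    exact hT.1 _ (hT.1 _ (ofCoord_one_mem_of_mem_rows hT hi hl₀) _ hx) _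
      (ofCoord_one_mem_of_mem_cols hT hi₀ hl)

lemma eq_of_rows_eq_of_cols_eq {T' : Set (I × G × Λ)} (hT : ReesClosed P T)
    (hT' : ReesClosed P T') (hrows : rows T = rows T') (hcols : cols T = cols T')
    (hi₀ : i₀ ∈ rows T) (hl₀ : l₀ ∈ cols T)
    (hbase : ∀ a, ofCoord P i₀ l₀ i₀ a l₀ ∈ T ↔ ofCoord P i₀ l₀ i₀ a l₀ ∈ T') :
    T = T' := by
  ext x
  rw [mem_iff_ofCoord_coord_mem hT hi₀ hl₀,
    mem_iff_ofCoord_coord_mem hT' (hrows ▸ hi₀) (hcols ▸ hl₀), hrows, hcols, hbase]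

lemma ofCoord_mem_of_mem_closure (hT : ReesClosed P T)
    (he₀ : ofCoord P i₀ l₀ i₀ 1 l₀ ∈ T)
    {B : Set G} (hB : ∀ b ∈ B, ofCoord P i₀ l₀ i₀ b l₀ ∈ T) {a : G}
    (ha : a ∈ Subgroup.closure B) : ofCoord P i₀ l₀ i₀ a l₀ ∈ T := by
  induction ha using Subgroup.closure_induction with
  | mem b hb => exact hB b hb
  | one => exact he₀
  | mul a b _ _ ha hb => exact reesMul_ofCoord_base a b ▸ hT.1 _ ha _ hb
  | inv a _ ha => exact reesBar_ofCoord_base a ▸ hT.2 _ ha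

end Subalgebra

variable (P i₀ l₀) in
def generators (A : Set (I × G × Λ)) : Set G :=
  coord P i₀ l₀ '' A ∪ Set.image2 (normSandwich P i₀ l₀) (cols A) (rows A)

lemma exists_finset_generators (A : Finset (I × G × Λ)) :
    ∃ B : Finset G, B.card ≤ A.card + A.card * A.card ∧
      (B : Set G) = generators P i₀ l₀ (A : Set (I × G × Λ)) := by
  classical
  refine ⟨A.image (coord P i₀ l₀) ∪
      Finset.image₂ (normSandwich P i₀ l₀) (A.image fun x => x.2.2) (A.image Prod.fst),
    ?_, ?_⟩
  · refine (Finset.card_union_le _ _).trans (add_le_add Finset.card_image_le ?_)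
    exact (Finset.card_image₂_le _ _ _).trans
      (Nat.mul_le_mul Finset.card_image_le Finset.card_image_le)
  · simp [generators, rows, cols]

lemma coord_mem_closure_generators {A : Set (I × G × Λ)} {x : I × G × Λ}
    (hx : x ∈ reesClosure P A) :
    coord P i₀ l₀ x ∈ Subgroup.closure (generators P i₀ l₀ A) := by
  have hq : ∀ l ∈ cols A, ∀ i ∈ rows A,
      normSandwich P i₀ l₀ l i ∈ Subgroup.closure (generators P i₀ l₀ A) :=
    fun l hl i hi => Subgroup.subset_closure (Or.inr ⟨l, hl, i, hi, rfl⟩)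
  refine (reesClosure_subset (T := {x | x.1 ∈ rows A ∧ x.2.2 ∈ cols A ∧
      coord P i₀ l₀ x ∈ Subgroup.closure (generators P i₀ l₀ A)})
    (fun x hx =>
      ⟨⟨x, hx, rfl⟩, ⟨x, hx, rfl⟩, Subgroup.subset_closure (Or.inl ⟨x, hx, rfl⟩)⟩)
    ⟨?_, ?_⟩ hx).2.2
  · rintro x ⟨hxi, hxl, hx⟩ y ⟨hyi, hyl, hy⟩
    refine ⟨hxi, hyl, ?_⟩
    rw [coord_reesMul]
    exact mul_mem (mul_mem hx (hq _ hxl _ hyi)) hy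
  · rintro x ⟨hxi, hxl, hx⟩
    refine ⟨hxi, hxl, ?_⟩
    rw [coord_reesBar]
    have hq' := inv_mem (hq _ hxl _ hxi)
    exact mul_mem (mul_mem hq' (inv_mem hx)) hq'

lemma ofCoord_mem_reesClosure_iff {A : Set (I × G × Λ)} (hi₀ : i₀ ∈ rows A)
    (hl₀ : l₀ ∈ cols A) {a : G} :
    ofCoord P i₀ l₀ i₀ a l₀ ∈ reesClosure P A ↔
      a ∈ Subgroup.closure (generators P i₀ l₀ A) := by
  have hT := reesClosed_reesClosure (P := P) A
  rw [← rows_reesClosure (P := P)] at hi₀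
  rw [← cols_reesClosure (P := P)] at hl₀
  refine ⟨fun ha => by simpa using coord_mem_closure_generators (i₀ := i₀) (l₀ := l₀) ha,
    ofCoord_mem_of_mem_closure hT (ofCoord_one_mem_of_mem_rows hT hi₀ hl₀) ?_⟩
  rintro _ (⟨x, hx, rfl⟩ | ⟨l, hl, i, hi, rfl⟩)
  · exact ((mem_iff_ofCoord_coord_mem hT hi₀ hl₀).1 (subset_reesClosure A hx)).2.2
  · rw [← reesMul_ofCoord_one_col_row]
    rw [← rows_reesClosure (P := P)] at hi
    rw [← cols_reesClosure (P := P)] at hl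
    exact hT.1 _ (ofCoord_one_mem_of_mem_cols hT hi₀ hl) _
      (ofCoord_one_mem_of_mem_rows hT hi hl₀)

lemma reesClosed_image_ofCoord (K : Subgroup G) :
    ReesClosed P ((fun a => ofCoord P i₀ l₀ i₀ a l₀) '' K) :=
  ⟨by rintro _ ⟨a, ha, rfl⟩ _ ⟨b, hb, rfl⟩
      exact ⟨a * b, mul_mem ha hb, (reesMul_ofCoord_base a b).symm⟩,
    by rintro _ ⟨a, ha, rfl⟩; exact ⟨a⁻¹, inv_mem ha, (reesBar_ofCoord_base a).symm⟩⟩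

lemma reesClosure_image_ofCoord_insert_one (A : Set G) :
    reesClosure P ((fun a => ofCoord P i₀ l₀ i₀ a l₀) '' insert 1 A) =
      (fun a => ofCoord P i₀ l₀ i₀ a l₀) '' Subgroup.closure A := by
  refine subset_antisymm (reesClosure_subset (Set.image_mono ?_) (reesClosed_image_ofCoord _)) ?_
  · exact Set.insert_subset (one_mem _) Subgroup.subset_closure
  · rintro _ ⟨a, ha, rfl⟩
    have hsub :=
      subset_reesClosure (P := P) ((fun a => ofCoord P i₀ l₀ i₀ a l₀) '' insert 1 A)
    exact ofCoord_mem_of_mem_closure (reesClosed_reesClosure _)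
      (hsub ⟨1, Set.mem_insert _ _, rfl⟩)
      (fun b hb => hsub ⟨b, Set.mem_insert_of_mem _ hb, rfl⟩) ha

variable (P) in
def IsTakCS : Prop :=
  ∀ (M : ℕ) (T : ℕ → Set (I × G × Λ)), (∀ n, IsReesCS P (T n)) → Monotone T →
    (∀ n, ∃ A : Finset (I × G × Λ), A.card ≤ M ∧
      reesClosure P (A : Set (I × G × Λ)) = T n) →
    ∃ p, ∀ n, p ≤ n → T n = T p

lemma exists_rows_cols_stable {M : ℕ} {T : ℕ → Set (I × G × Λ)} (hmono : Monotone T)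
    (hrank : ∀ n, ∃ A : Finset (I × G × Λ), A.card ≤ M ∧
      reesClosure P (A : Set (I × G × Λ)) = T n) :
    ∃ N, ∀ n, N ≤ n → rows (T n) = rows (T N) ∧ cols (T n) = cols (T N) := by
  classical
  choose A hAcard hA using hrank
  have hrows : ∀ n, rows (T n) = ((A n).image Prod.fst : Finset I) := fun n => by
    rw [← hA n, rows_reesClosure, Finset.coe_image]; rfl
  have hcols : ∀ n, cols (T n) = ((A n).image fun x => x.2.2 : Finset Λ) := fun n => by
    rw [← hA n, cols_reesClosure, Finset.coe_image]; rfl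
  obtain ⟨N₁, hN₁⟩ :=
    Set.exists_forall_ge_eq_of_monotone_of_ncard_le (s := fun n => rows (T n))
    (fun _ _ h => Set.image_mono (hmono h)) (fun n => (hrows n).symm ▸ Finset.finite_toSet _)
    (fun n => by rw [hrows n, Set.ncard_coe_finset]; exact Finset.card_image_le.trans (hAcard n))
  obtain ⟨N₂, hN₂⟩ :=
    Set.exists_forall_ge_eq_of_monotone_of_ncard_le (s := fun n => cols (T n))
    (fun _ _ h => Set.image_mono (hmono h)) (fun n => (hcols n).symm ▸ Finset.finite_toSet _)
    (fun n => by rw [hcols n, Set.ncard_coe_finset]; exact Finset.card_image_le.trans (hAcard n))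
  refine ⟨max N₁ N₂, fun n hn => ⟨?_, ?_⟩⟩
  · exact (hN₁ n (le_of_max_le_left hn)).trans (hN₁ _ (le_max_left _ _)).symm
  · exact (hN₂ n (le_of_max_le_right hn)).trans (hN₂ _ (le_max_right _ _)).symm

variable (P) in
lemma isTakCS_of_isTakahasiGroup (hG : IsTakahasiGroup G) : IsTakCS P := by
  intro M T hT hmono hrank
  obtain ⟨N, hN⟩ := exists_rows_cols_stable hmono hrank
  choose A hAcard hA using hrank
  obtain ⟨⟨i₀, g₀, l₀⟩, hx₀⟩ := (hT N).1
  have hi₀ : ∀ k, i₀ ∈ rows (T (N + k)) :=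
    fun k => (hN _ le_self_add).1 ▸ ⟨_, hx₀, rfl⟩
  have hl₀ : ∀ k, l₀ ∈ cols (T (N + k)) :=
    fun k => (hN _ le_self_add).2 ▸ ⟨_, hx₀, rfl⟩
  let H : ℕ → Subgroup G := fun k => Subgroup.closure (generators P i₀ l₀ (A (N + k)))
  have hH : ∀ k a, a ∈ H k ↔ ofCoord P i₀ l₀ i₀ a l₀ ∈ T (N + k) := fun k a => by
    have hi := hi₀ k
    have hl := hl₀ k
    rw [← hA, rows_reesClosure] at hi
    rw [← hA, cols_reesClosure] at hl
    rw [← hA]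
    exact (ofCoord_mem_reesClosure_iff hi hl).symm
  have hHmono : Monotone H := fun j k hjk a => by
    simpa only [hH] using fun ha => hmono (by omega) ha
  have hHrank : ∀ k, ∃ B : Finset G,
      B.card ≤ M + M * M ∧ Subgroup.closure (B : Set G) = H k := fun k => by
    obtain ⟨B, hBcard, hB⟩ :=
      exists_finset_generators (P := P) (i₀ := i₀) (l₀ := l₀) (A (N + k))
    have := hAcard (N + k)
    exact ⟨B, hBcard.trans (by gcongr), by rw [hB]⟩
  obtain ⟨p, hp⟩ := hG _ H hHmono hHrank
  refine ⟨N + p, fun n hn => ?_⟩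
  obtain ⟨k, rfl⟩ : ∃ k, n = N + k := ⟨n - N, by omega⟩
  refine eq_of_rows_eq_of_cols_eq (hT _).2 (hT _).2 ?_ ?_ (hi₀ k) (hl₀ k) fun a => ?_
  · rw [(hN _ le_self_add).1, (hN _ le_self_add).1]
  · rw [(hN _ le_self_add).2, (hN _ le_self_add).2]
  · rw [← hH, ← hH, hp k (by omega)]

variable (P) in
lemma isTakahasiGroup_of_isTakCS [Nonempty I] [Nonempty Λ] (hP : IsTakCS P) :
    IsTakahasiGroup G := by
  classical
  intro M H hmono hrank
  obtain ⟨i₀⟩ := ‹Nonempty I›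
  obtain ⟨l₀⟩ := ‹Nonempty Λ›
  let φ : G → I × G × Λ := fun a => ofCoord P i₀ l₀ i₀ a l₀
  have hrankT : ∀ n, ∃ A : Finset (I × G × Λ), A.card ≤ M + 1 ∧
      reesClosure P (A : Set (I × G × Λ)) = φ '' H n := fun n => by
    obtain ⟨A, hAcard, hA⟩ := hrank n
    refine ⟨(insert 1 A).image φ,
      Finset.card_image_le.trans ((Finset.card_insert_le _ _).trans (by omega)), ?_⟩
    rw [Finset.coe_image, Finset.coe_insert, reesClosure_image_ofCoord_insert_one, hA]
  obtain ⟨p, hp⟩ := hP (M + 1) (fun n => φ '' H n)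
    (fun n => ⟨⟨_, 1, one_mem _, rfl⟩, reesClosed_image_ofCoord _⟩)
    (fun _ _ h => Set.image_mono (hmono h)) hrankT
  exact ⟨p, fun n hn =>
    SetLike.coe_injective ((ofCoord_injective i₀ l₀).image_injective (hp n hn))⟩

end ReesMatrix

/-- a Rees matrix semigroup `S = M[G; I, Λ; P]` over a group `G`
belongs to Tak(𝒞𝒮) (every ascending chain of CS-subalgebras of bounded
CS-rank is stationary) if and only if `G` is a Takahasi group (every ascending
chain of subgroups of bounded group rank is stationary). -/
theorem stmt_12 {G I Λ : Type*} [Group G] [Nonempty I] [Nonempty Λ]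
    (P : Λ × I → G) :
    (∀ (M : ℕ) (T : ℕ → Set (I × G × Λ)), (∀ n, IsReesCS P (T n)) →
       Monotone T →
       (∀ n, ∃ A : Finset (I × G × Λ), A.card ≤ M ∧
         reesClosure P (A : Set (I × G × Λ)) = T n) →
       ∃ p, ∀ n, p ≤ n → T n = T p) ↔
    (∀ (M : ℕ) (H : ℕ → Subgroup G), Monotone H →
       (∀ n, ∃ A : Finset G, A.card ≤ M ∧
         Subgroup.closure (A : Set G) = H n) →
       ∃ p, ∀ n, p ≤ n → H n = H p) :=
  ⟨ReesMatrix.isTakahasiGroup_of_isTakCS P, ReesMatrix.isTakCS_of_isTakahasiGroup P⟩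
end

section
/- Let S be a semigroup such that (a) every ascending chain of subsemigroups of S of bounded rank is stationary (S ∈ Tak(𝒮)), and (b) there exists N ∈ ℕ such that rk(Fix(ψ)) ≤ N for every semigroup endomorphism ψ of S (S ∈ UE). Then for every semigroup endomorphism φ of S, the subsemigroup of periodic points Per(φ) = { a ∈ S : a φⁿ = a for some n ≥ 1 } is finitely generated; indeed rk(Per(φ)) ≤ N, and Per(φ) = Fix(φ^{k!}) for some k ≥ 1. -/
/-- let `S` be a semigroup such that (a) `S ∈ Tak(𝒮)` (every
ascending chain of subsemigroups of bounded rank is stationary) and (b) there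
is `N` bounding the rank of `Fix(ψ)` for every endomorphism `ψ` of `S`
(`S ∈ UE`). Then for every endomorphism `φ` of `S`, the subsemigroup
`Per(φ) = { a : φⁿ(a) = a for some n ≥ 1 }` is finitely generated; indeed it
has a generating set of cardinality at most `N`, and `Per(φ) = Fix(φ^{k!})`
for some `k ≥ 1`. -/
theorem stmt_14 (S : Type*) [Semigroup S] (N : ℕ)
    (hTak : ∀ (M : ℕ) (T : ℕ → Subsemigroup S), Monotone T →
      (∀ n, ∃ A : Finset S, A.card ≤ M ∧
        Subsemigroup.closure (A : Set S) = T n) →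
      ∃ p, ∀ n, p ≤ n → T n = T p)
    (hUE : ∀ ψ : S →ₙ* S, ∃ A : Finset S, A.card ≤ N ∧
      (Subsemigroup.closure (A : Set S) : Set S) = {a : S | ψ a = a})
    (φ : S →ₙ* S) :
    ∃ (B : Finset S) (k : ℕ), 1 ≤ k ∧ B.card ≤ N ∧
      (Subsemigroup.closure (B : Set S) : Set S) =
        {a : S | ∃ n : ℕ, 1 ≤ n ∧ (⇑φ)^[n] a = a} ∧
      {a : S | ∃ n : ℕ, 1 ≤ n ∧ (⇑φ)^[n] a = a} =
        {a : S | (⇑φ)^[Nat.factorial k] a = a} := by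
  -- iterates of φ are multiplicative
  have hmul : ∀ (n : ℕ) (a b : S), (⇑φ)^[n] (a * b) = (⇑φ)^[n] a * (⇑φ)^[n] b := by
    intro n
    induction n with
    | zero => intro a b; simp
    | succ m ih =>
      intro a b
      rw [Function.iterate_succ_apply', Function.iterate_succ_apply',
        Function.iterate_succ_apply', ih a b, map_mul]
  -- fixed points of multiples
  have key : ∀ (m c : ℕ) (a : S), (⇑φ)^[m] a = a → (⇑φ)^[m * c] a = a := by
    intro m c a h
    rw [Function.iterate_mul]
    exact Function.iterate_fixed h c
  -- chain of subsemigroups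
  set T : ℕ → Subsemigroup S := fun n =>
    { carrier := {a : S | (⇑φ)^[Nat.factorial n] a = a}
      mul_mem' := by
        intro a b ha hb
        simp only [Set.mem_setOf_eq] at *
        rw [hmul, ha, hb] } with hT
  have hTmono : Monotone T := by
    apply monotone_nat_of_le_succ
    intro n a ha
    simp only [hT, Subsemigroup.mem_mk, Set.mem_setOf_eq] at *
    rw [Nat.factorial_succ, mul_comm]
    exact key _ _ _ ha
  have hTrank : ∀ n, ∃ A : Finset S, A.card ≤ N ∧
      Subsemigroup.closure (A : Set S) = T n := by
    intro n
    obtain ⟨A, hA, hAc⟩ := hUE ⟨(⇑φ)^[Nat.factorial n], hmul _⟩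
    exact ⟨A, hA, SetLike.coe_injective hAc⟩
  obtain ⟨p, hp⟩ := hTak N T hTmono hTrank
  set k := max p 1 with hk
  have hk1 : 1 ≤ k := le_max_right _ _
  have hset : {a : S | ∃ n : ℕ, 1 ≤ n ∧ (⇑φ)^[n] a = a} =
      {a : S | (⇑φ)^[Nat.factorial k] a = a} := by
    ext a
    constructor
    · rintro ⟨n, hn1, hna⟩
      set m := max n k with hm
      have ham : a ∈ T m := by
        simp only [hT, Subsemigroup.mem_mk, Set.mem_setOf_eq]
        obtain ⟨c, hc⟩ := Nat.dvd_factorial hn1 (le_max_left n k)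
        rw [hc]
        exact key _ _ _ hna
      have h1 : T m = T p := hp m (le_trans (le_max_left _ _) (le_max_right _ _))
      have h2 : T k = T p := hp k (le_max_left _ _)
      have : a ∈ T k := by rw [h2, ← h1]; exact ham
      simpa only [hT, Subsemigroup.mem_mk, Set.mem_setOf_eq] using this
    · intro ha
      exact ⟨Nat.factorial k, Nat.one_le_iff_ne_zero.mpr (Nat.factorial_ne_zero k), ha⟩
  obtain ⟨B, hB, hBc⟩ := hUE ⟨(⇑φ)^[Nat.factorial k], hmul _⟩
  refine ⟨B, k, hk1, hB, ?_, hset⟩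
  rw [hset]
  exact hBc
end

section
/- Let S be a semigroup such that (a) every ascending chain of subsemigroups of S of bounded rank is stationary (S ∈ Tak(𝒮)), and (b) there exists N ∈ ℕ such that rk(Fix(ψ)) ≤ N for every semigroup endomorphism ψ of S (S ∈ UE). Then for every semigroup endomorphism φ of S there exists a constant R_φ ≥ 1 such that a φ^{R_φ} = a for every a ∈ Per(φ); in particular, every periodic point of φ has period at most R_φ. -/
/-- let `S` be a semigroup such that (a) `S ∈ Tak(𝒮)` (every
ascending chain of subsemigroups of bounded rank is stationary) and (b) there
is `N` bounding the rank of `Fix(ψ)` for every endomorphism `ψ` of `S`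
(`S ∈ UE`). Then for every endomorphism `φ` of `S` there is a constant
`R_φ ≥ 1` with `φ^{R_φ}(a) = a` for every periodic point `a` of `φ`; in
particular every periodic point has period at most `R_φ`. -/
theorem stmt_15 (S : Type*) [Semigroup S] (N : ℕ)
    (hTak : ∀ (M : ℕ) (T : ℕ → Subsemigroup S), Monotone T →
      (∀ n, ∃ A : Finset S, A.card ≤ M ∧
        Subsemigroup.closure (A : Set S) = T n) →
      ∃ p, ∀ n, p ≤ n → T n = T p)
    (hUE : ∀ ψ : S →ₙ* S, ∃ A : Finset S, A.card ≤ N ∧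
      (Subsemigroup.closure (A : Set S) : Set S) = {a : S | ψ a = a})
    (φ : S →ₙ* S) :
    ∃ R : ℕ, 1 ≤ R ∧ ∀ a : S,
      (∃ n : ℕ, 1 ≤ n ∧ (⇑φ)^[n] a = a) → (⇑φ)^[R] a = a := by
  -- iterates of φ as mul homs
  have hmul : ∀ (k : ℕ) (x y : S), (⇑φ)^[k] (x * y) = (⇑φ)^[k] x * (⇑φ)^[k] y := by
    intro k
    induction k with
    | zero => intro x y; simp
    | succ k ih =>
      intro x y
      simp [Function.iterate_succ_apply', ih x y, map_mul]
  let ψ : ℕ → (S →ₙ* S) := fun k => ⟨(⇑φ)^[k], fun x y => hmul k x y⟩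
  -- fixed point subsemigroups of φ^[n!]
  let T : ℕ → Subsemigroup S := fun n =>
    { carrier := {a : S | (⇑φ)^[n.factorial] a = a}
      mul_mem' := by
        intro a b ha hb
        simp only [Set.mem_setOf_eq] at *
        rw [hmul, ha, hb] }
  -- fixed points propagate to multiples of the exponent
  have hdvd : ∀ (k m : ℕ) (a : S), k ∣ m → (⇑φ)^[k] a = a → (⇑φ)^[m] a = a := by
    rintro k m a ⟨c, rfl⟩ ha
    rw [Function.iterate_mul]
    exact Function.iterate_fixed ha c
  have hmono : Monotone T := by
    intro n m hnm a ha
    exact hdvd _ _ a (Nat.factorial_dvd_factorial hnm) ha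
  have hrank : ∀ n, ∃ A : Finset S, A.card ≤ N ∧
      Subsemigroup.closure (A : Set S) = T n := by
    intro n
    obtain ⟨A, hA, hcl⟩ := hUE (ψ n.factorial)
    exact ⟨A, hA, SetLike.coe_injective hcl⟩
  obtain ⟨p, hp⟩ := hTak N T hmono hrank
  refine ⟨p.factorial, p.factorial_pos, ?_⟩
  rintro a ⟨n, hn1, hna⟩
  have h1 : (⇑φ)^[(max n p).factorial] a = a :=
    hdvd n _ a (Nat.dvd_factorial hn1 (le_max_left n p)) hna
  have h2 : T (max n p) = T p := hp _ (le_max_right n p)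
  have : a ∈ T (max n p) := h1
  rw [h2] at this
  exact this
end

section
/- Let A be a finite set, let a₁, a₂, a₃, a₄ ∈ A (not necessarily distinct), and let M be the monoid defined by the presentation ⟨A | a₁a₂ = a₃a₄⟩ (the quotient of the free monoid A* by the monoid congruence generated by the pair (a₁a₂, a₃a₄)). Then for every monoid endomorphism φ of M: (i) the submonoid Per(φ) = { x ∈ M : φⁿ(x) = x for some n ≥ 1 } is finitely generated; and (ii) there exists a constant R_φ ≥ 1 such that φ^{R_φ}(x) = x for every x ∈ Per(φ), i.e., every periodic point of φ has period at most R_φ. -/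
/-- The monoid defined by the presentation `⟨A | a₁a₂ = a₃a₄⟩`: the quotient of
the free monoid on `A` by the monoid congruence generated by the single pair
`(a₁a₂, a₃a₄)`. -/
abbrev presMonoid {A : Type*} (a₁ a₂ a₃ a₄ : A) :=
  (conGen (fun u v : FreeMonoid A =>
    u = FreeMonoid.of a₁ * FreeMonoid.of a₂ ∧
    v = FreeMonoid.of a₃ * FreeMonoid.of a₄)).Quotient

/-!
The defining relation is length-preserving, so word length is an additive function on `M` with
only finitely many elements of each length. If `x = g₁ ⋯ gₖ` (a product of generators) has
period `n`, then `len (φᵐ gᵢ) ≤ len (φᵐ x)` stays bounded in `m`, so every `gᵢ` has a finite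
orbit and is eventually periodic. For `m` a large multiple of `n`, `x = φᵐ g₁ ⋯ φᵐ gₖ` is then a
product of periodic points lying in the finite union of the finite orbits of generators. These
finitely many periodic points generate `Per φ`, and the lcm of their periods is a common period.
-/

open Filter Function

namespace Function

variable {α : Type*} {f : α → α} {x : α}

theorem finite_range_iterate_of_mem_periodicPts (hx : x ∈ periodicPts f) :
    (Set.range (f^[·] x)).Finite := by
  obtain ⟨n, hn, hx⟩ := hx
  refine ((Set.finite_Iio n).image (f^[·] x)).subset ?_
  rintro _ ⟨m, rfl⟩
  exact ⟨m % n, Nat.mod_lt m hn, hx.iterate_mod_apply m⟩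

theorem eventually_iterate_mem_periodicPts (h : (Set.range (f^[·] x)).Finite) :
    ∀ᶠ m in atTop, f^[m] x ∈ periodicPts f := by
  obtain ⟨a, b, hab, heq⟩ := h.exists_lt_map_eq_of_forall_mem (f := (f^[·] x)) Set.mem_range_self
  have ha : IsPeriodicPt f (b - a) (f^[a] x) := by
    rw [IsPeriodicPt, IsFixedPt, ← iterate_add_apply, Nat.sub_add_cancel hab.le, heq]
  filter_upwards [eventually_ge_atTop a] with m hm
  rw [← Nat.sub_add_cancel hm, iterate_add_apply]
  exact mk_mem_periodicPts (Nat.sub_pos_of_lt hab) (ha.apply_iterate _)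

theorem exists_pos_forall_isPeriodicPt_of_finite {s : Set α} (hs : s.Finite)
    (h : s ⊆ periodicPts f) : ∃ n > 0, ∀ x ∈ s, IsPeriodicPt f n x := by
  refine ⟨hs.toFinset.lcm (minimalPeriod f), Nat.pos_of_ne_zero fun h0 => ?_, fun x hx => ?_⟩
  · obtain ⟨x, hx, hx0⟩ := Finset.lcm_eq_zero_iff.1 h0
    exact (minimalPeriod_pos_of_mem_periodicPts (h (hs.mem_toFinset.1 hx))).ne' hx0
  · exact isPeriodicPt_iff_minimalPeriod_dvd.2 (Finset.dvd_lcm (hs.mem_toFinset.2 hx))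

theorem IsPeriodicPt.mul {M : Type*} [Monoid M] {φ : M →* M} {n : ℕ} {x y : M}
    (hx : IsPeriodicPt φ n x) (hy : IsPeriodicPt φ n y) : IsPeriodicPt φ n (x * y) :=
  (iterate_map_mul φ n x y).trans (congrArg₂ _ hx hy)

end Function

namespace Submonoid

variable {M : Type*} [Monoid M]

theorem mem_closure_inter_of_factor_closed {s t : Set M}
    (ht : ∀ x y, x * y ∈ t → x ∈ t ∧ y ∈ t) {x : M} (hx : x ∈ closure s) (hxt : x ∈ t) :
    x ∈ closure (s ∩ t) := by
  induction hx using closure_induction with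
  | mem x hxs => exact subset_closure ⟨hxs, hxt⟩
  | one => exact one_mem _
  | mul x y _ _ ihx ihy =>
    obtain ⟨hx, hy⟩ := ht x y hxt
    exact mul_mem (ihx hx) (ihy hy)

end Submonoid

namespace MonoidHom

variable {M : Type*} [Monoid M] (φ : M →* M)

theorem exists_pos_forall_mem_closure_isPeriodicPt {s : Set M} (hs : s.Finite)
    (h : s ⊆ periodicPts φ) : ∃ n > 0, ∀ x ∈ Submonoid.closure s, IsPeriodicPt φ n x := by
  obtain ⟨n, hn, hper⟩ := exists_pos_forall_isPeriodicPt_of_finite hs h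
  refine ⟨n, hn, fun x hx => ?_⟩
  induction hx using Submonoid.closure_induction with
  | mem x hx => exact hper x hx
  | one => exact iterate_map_one φ n
  | mul x y _ _ hx hy => exact hx.mul hy

theorem finite_range_iterate_of_mul {len : M → ℕ} (hlen : ∀ x y, len (x * y) = len x + len y)
    (hfin : ∀ C, {x | len x ≤ C}.Finite) {x y : M} (h : (Set.range (φ^[·] (x * y))).Finite) :
    (Set.range (φ^[·] x)).Finite ∧ (Set.range (φ^[·] y)).Finite := by
  obtain ⟨C, hC⟩ := (h.image len).bddAbove
  have hle (m : ℕ) : len (φ^[m] x) + len (φ^[m] y) ≤ C := by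
    rw [← hlen, ← iterate_map_mul]
    exact hC ⟨_, ⟨m, rfl⟩, rfl⟩
  constructor
  · exact (hfin C).subset (Set.range_subset_iff.2 fun m => (Nat.le_add_right _ _).trans (hle m))
  · exact (hfin C).subset (Set.range_subset_iff.2 fun m => (Nat.le_add_left _ _).trans (hle m))

theorem exists_finite_closure_eq_periodicPts {len : M → ℕ}
    (hlen : ∀ x y, len (x * y) = len x + len y) (hfin : ∀ C, {x | len x ≤ C}.Finite)
    {G : Set M} (hG : G.Finite) (hGtop : Submonoid.closure G = ⊤) :
    ∃ F : Set M, F.Finite ∧ (Submonoid.closure F : Set M) = periodicPts φ := by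
  set G' := G ∩ {g | (Set.range (φ^[·] g)).Finite}
  have hG' : G'.Finite := hG.subset Set.inter_subset_left
  set F := (⋃ g ∈ G', Set.range (φ^[·] g)) ∩ periodicPts φ
  have hF : F.Finite := (hG'.biUnion fun g hg => hg.2).subset Set.inter_subset_left
  obtain ⟨N, hN⟩ := eventually_atTop.1 <|
    hG'.eventually_all.2 fun g hg => eventually_iterate_mem_periodicPts hg.2
  refine ⟨F, hF, subset_antisymm ?_ fun x hx => ?_⟩
  · obtain ⟨n, hn, hper⟩ := exists_pos_forall_mem_closure_isPeriodicPt φ hF Set.inter_subset_right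
    exact fun x hx => mk_mem_periodicPts hn (hper x hx)
  obtain ⟨n, hn, hxn⟩ := hx
  have hxG' : x ∈ Submonoid.closure G' :=
    Submonoid.mem_closure_inter_of_factor_closed
      (fun _ _ => finite_range_iterate_of_mul φ hlen hfin) (hGtop ▸ Submonoid.mem_top x)
      (finite_range_iterate_of_mem_periodicPts ⟨n, hn, hxn⟩)
  have hmap :
      φ^[n * N] x ∈ Submonoid.closure (((show Monoid.End M from φ) ^ (n * N)) '' G') := by
    rw [← map_mclosure]
    exact Submonoid.mem_map_of_mem _ hxG'
  rw [← (hxn.mul_const N).eq]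
  refine Submonoid.closure_mono ?_ hmap
  rintro _ ⟨g, hg, rfl⟩
  exact ⟨Set.mem_biUnion hg ⟨n * N, rfl⟩, hN _ (Nat.le_mul_of_pos_left N hn) g hg⟩

end MonoidHom

namespace FreeMonoid

variable (A : Type*)

def lengthHom : FreeMonoid A →* Multiplicative ℕ where
  toFun w := .ofAdd w.length
  map_one' := rfl
  map_mul' := length_mul

end FreeMonoid

namespace Con

variable {A : Type*} (c : Con (FreeMonoid A)) (hc : c ≤ ker (FreeMonoid.lengthHom A))

def wordLength (x : c.Quotient) : ℕ := (c.lift _ hc x).toAdd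

theorem wordLength_mul (x y : c.Quotient) :
    c.wordLength hc (x * y) = c.wordLength hc x + c.wordLength hc y :=
  congrArg Multiplicative.toAdd (map_mul _ x y)

theorem finite_setOf_wordLength_le [Finite A] (C : ℕ) : {x | c.wordLength hc x ≤ C}.Finite := by
  refine (((List.finite_length_le A C).preimage FreeMonoid.toList.injective.injOn).image
    c.mk').subset ?_
  intro x hx
  obtain ⟨w, rfl⟩ := c.mk'_surjective x
  exact ⟨w, hx, rfl⟩

theorem closure_range_mk'_of : Submonoid.closure (Set.range (c.mk' ∘ FreeMonoid.of)) = ⊤ := by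
  rw [Set.range_comp, ← MonoidHom.map_mclosure, FreeMonoid.closure_range_of,
    ← MonoidHom.mrange_eq_map, MonoidHom.mrange_eq_top]
  exact c.mk'_surjective

end Con

/-- let `A` be a finite set, `a₁, a₂, a₃, a₄ ∈ A`, and `M` the
monoid defined by `⟨A | a₁a₂ = a₃a₄⟩`. Then for every monoid endomorphism `φ`
of `M`: (i) the submonoid `Per(φ) = { x : φⁿ(x) = x for some n ≥ 1 }` is
finitely generated, and (ii) there exists `R_φ ≥ 1` with `φ^{R_φ}(x) = x` for
every `x ∈ Per(φ)`, i.e. all periods are at most `R_φ`. -/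
theorem stmt_16 (A : Type*) [Fintype A] (a₁ a₂ a₃ a₄ : A)
    (φ : presMonoid a₁ a₂ a₃ a₄ →* presMonoid a₁ a₂ a₃ a₄) :
    (∃ B : Finset (presMonoid a₁ a₂ a₃ a₄),
      (Submonoid.closure (B : Set (presMonoid a₁ a₂ a₃ a₄)) : Set (presMonoid a₁ a₂ a₃ a₄)) =
        {x : presMonoid a₁ a₂ a₃ a₄ | ∃ n : ℕ, 1 ≤ n ∧ (⇑φ)^[n] x = x}) ∧
    (∃ R : ℕ, 1 ≤ R ∧ ∀ x : presMonoid a₁ a₂ a₃ a₄,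
      (∃ n : ℕ, 1 ≤ n ∧ (⇑φ)^[n] x = x) → (⇑φ)^[R] x = x) := by
  have hc : conGen (fun u v : FreeMonoid A =>
      u = FreeMonoid.of a₁ * FreeMonoid.of a₂ ∧ v = FreeMonoid.of a₃ * FreeMonoid.of a₄) ≤
      Con.ker (FreeMonoid.lengthHom A) :=
    Con.conGen_le.2 <| by rintro _ _ ⟨rfl, rfl⟩; rfl
  obtain ⟨F, hF, hFper⟩ := φ.exists_finite_closure_eq_periodicPts (Con.wordLength_mul _ hc)
    (Con.finite_setOf_wordLength_le _ hc) (Set.finite_range _) (Con.closure_range_mk'_of _)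
  obtain ⟨R, hR, hRper⟩ := φ.exists_pos_forall_mem_closure_isPeriodicPt hF
    (hFper ▸ Submonoid.subset_closure)
  refine ⟨⟨hF.toFinset, by rw [hF.coe_toFinset, hFper]; rfl⟩, R, hR, fun x hx => hRper x ?_⟩
  rw [← SetLike.mem_coe, hFper]
  exact hx
end

section
/- Let S be the semigroup defined by the presentation ⟨a, b, c | cac = cbc⟩, i.e., the quotient of the free semigroup on the three-element set {a, b, c} by the semigroup congruence generated by the pair (cac, cbc). Then the assignment a ↦ b, b ↦ a, c ↦ c extends to a well-defined semigroup endomorphism φ of S; φ is an automorphism with φ ∘ φ = id; the elements cac, (ca)²c, (ca)³c, … are pairwise distinct fixed points of φ; and the subsemigroup Fix(φ) = { x ∈ S : φ(x) = x } is not finitely generated. In particular, S ∉ UA. -/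
/-- The single defining relation `cac = cbc` of the presentation
`⟨a, b, c | cac = cbc⟩`, on the free semigroup over `Fin 3`
(with `a = 0`, `b = 1`, `c = 2`). -/
def cacRel (u v : FreeSemigroup (Fin 3)) : Prop :=
  u = FreeSemigroup.of 2 * FreeSemigroup.of 0 * FreeSemigroup.of 2 ∧
  v = FreeSemigroup.of 2 * FreeSemigroup.of 1 * FreeSemigroup.of 2

/-- The semigroup `S` defined by the presentation `⟨a, b, c | cac = cbc⟩`. -/
abbrev cacSemigroup := (conGen cacRel).Quotient

/-- The word `(ca)^{n+1} c` in the free semigroup (so `cacWord 0 = cac`). -/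
def cacWord : ℕ → FreeSemigroup (Fin 3)
  | 0 => FreeSemigroup.of 2 * FreeSemigroup.of 0 * FreeSemigroup.of 2
  | n + 1 => FreeSemigroup.of 2 * FreeSemigroup.of 0 * cacWord n

/-!
The letter swap `a ↔ b` of the free semigroup maps the relation `cac = cbc` to its reverse, so it
induces an involutive automorphism of `S`. The congruence generated by `cac = cbc` preserves the
first letter, the last letter and the positions of the letter `c`. Since the swap moves `a` and `b`,
every fixed point begins and ends with `c`, so a product of two fixed points has two adjacent `c`'s,
whereas in `(ca)ⁿ⁺¹c` the letter `c` alternates with the other letters. Hence each `(ca)ⁿ⁺¹c` lies in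
every generating set of `Fix(φ)`, and these elements are pairwise distinct since their lengths are.
-/

open FreeSemigroup

namespace Con

variable {M N : Type*} [Mul M] [Mul N]

theorem apply_eq_apply_of_conGen {β : Type*} {r : M → M → Prop} (f : M → β)
    (hmul : ∀ x x' y y', f x = f x' → f y = f y' → f (x * y) = f (x' * y'))
    (hr : ∀ x y, r x y → f x = f y) {x y : M} (h : conGen r x y) : f x = f y :=
  (conGen_le (c := { Setoid.ker f with mul' := hmul _ _ _ _ })).2 hr h

def liftMulHom (c : Con M) (f : M →ₙ* N) (h : c ≤ ker f) : c.Quotient →ₙ* N where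
  toFun x := c.liftOn x f h
  map_mul' x y := Con.induction_on₂ x y fun u v => map_mul f u v

end Con

theorem Subsemigroup.mem_of_coe_closure_eq {M : Type*} [Mul M] {s T : Set M}
    (hs : (closure s : Set M) = T) {x : M} (hx : x ∈ T)
    (hirr : ∀ y ∈ T, ∀ z ∈ T, y * z ≠ x) : x ∈ s := by
  subst hs
  induction hx using closure_induction with
  | mem x hx => exact hx
  | mul y z hy hz => exact absurd rfl (hirr y hy z hz)

namespace FreeSemigroup

variable {α β : Type*}

def toList (x : FreeSemigroup α) : List α := x.head :: x.tail

@[simp]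
theorem toList_mul (x y : FreeSemigroup α) : (x * y).toList = x.toList ++ y.toList := by
  simp [toList, tail_mul]

def last (x : FreeSemigroup α) : α := x.toList.getLast (List.cons_ne_nil _ _)

@[simp]
theorem last_mul (x y : FreeSemigroup α) : (x * y).last = y.last := by
  simp [last, List.getLast_append_of_ne_nil, toList]

theorem getLast?_toList (x : FreeSemigroup α) : x.toList.getLast? = some x.last :=
  List.getLast?_eq_some_getLast _

@[simp]
theorem head_map (f : α → β) (x : FreeSemigroup α) : (map f x).head = f x.head := by
  induction x with
  | ih1 a => rfl
  | ih2 a y _ _ => rw [map_mul, head_mul, head_mul]; rfl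

@[simp]
theorem last_map (f : α → β) (x : FreeSemigroup α) : (map f x).last = f x.last := by
  induction x with
  | ih1 a => rfl
  | ih2 a y _ ih => rw [map_mul, last_mul, last_mul, ih]

theorem rel_last_head_of_isChain_toList_mul {R : α → α → Prop} {x y : FreeSemigroup α}
    (h : (x * y).toList.IsChain R) : R x.last y.head := by
  rw [toList_mul, List.isChain_append] at h
  exact h.2.2 _ (getLast?_toList x) _ rfl

end FreeSemigroup

namespace cacSemigroup

def freeSwap : FreeSemigroup (Fin 3) →ₙ* FreeSemigroup (Fin 3) := map (Equiv.swap 0 1)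

theorem freeSwap_freeSwap (w : FreeSemigroup (Fin 3)) : freeSwap (freeSwap w) = w := by
  induction w with
  | ih1 a => simp [freeSwap]
  | ih2 a w _ ih => rw [map_mul, map_mul, ih]; simp [freeSwap]

theorem conGen_le_ker_freeSwap :
    conGen cacRel ≤ Con.ker ((conGen cacRel).mkMulHom.comp freeSwap) := by
  refine Con.conGen_le.2 ?_
  rintro _ _ ⟨rfl, rfl⟩
  exact ((Con.eq _).2 (ConGen.Rel.of _ _ ⟨rfl, rfl⟩)).symm

def swap : cacSemigroup →ₙ* cacSemigroup :=
  (conGen cacRel).liftMulHom _ conGen_le_ker_freeSwap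

theorem swap_coe (w : FreeSemigroup (Fin 3)) : swap w = (freeSwap w : cacSemigroup) := rfl

theorem swap_swap (x : cacSemigroup) : swap (swap x) = x :=
  Con.induction_on x fun w => by rw [swap_coe, swap_coe, freeSwap_freeSwap]

def cMask : FreeSemigroup (Fin 3) →ₙ* FreeSemigroup Bool := map fun i => decide (i = 2)

theorem cMask_eq_of_rel {u v : FreeSemigroup (Fin 3)} (h : conGen cacRel u v) :
    cMask u = cMask v :=
  (Con.conGen_le (c := Con.ker cMask)).2 (by rintro _ _ ⟨rfl, rfl⟩; rfl) h

theorem head_eq_of_rel {u v : FreeSemigroup (Fin 3)} (h : conGen cacRel u v) :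
    u.head = v.head :=
  Con.apply_eq_apply_of_conGen head (fun _ _ _ _ h _ => h) (by rintro _ _ ⟨rfl, rfl⟩; rfl) h

theorem last_eq_of_rel {u v : FreeSemigroup (Fin 3)} (h : conGen cacRel u v) :
    u.last = v.last :=
  Con.apply_eq_apply_of_conGen last (fun _ _ _ _ _ h => by simpa using h)
    (by rintro _ _ ⟨rfl, rfl⟩; rfl) h

theorem eq_two_of_swap_eq {i : Fin 3} : Equiv.swap 0 1 i = i → i = 2 := by
  revert i; decide

theorem head_eq_two_of_swap_eq {u : FreeSemigroup (Fin 3)} (h : swap u = u) : u.head = 2 :=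
  eq_two_of_swap_eq (by simpa [freeSwap] using head_eq_of_rel ((Con.eq _).1 h))

theorem last_eq_two_of_swap_eq {u : FreeSemigroup (Fin 3)} (h : swap u = u) : u.last = 2 :=
  eq_two_of_swap_eq (by simpa [freeSwap] using last_eq_of_rel ((Con.eq _).1 h))

theorem exists_cacWord_eq_two_mul (n : ℕ) : ∃ w, cacWord n = of 2 * w := by
  cases n with
  | zero => exact ⟨of 0 * of 2, mul_assoc _ _ _⟩
  | succ n => exact ⟨of 0 * cacWord n, mul_assoc _ _ _⟩

theorem conGen_freeSwap_cacWord (n : ℕ) : conGen cacRel (freeSwap (cacWord n)) (cacWord n) := by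
  have hcbc : conGen cacRel (of 2 * of 1 * of 2) (of 2 * of 0 * of 2) :=
    (conGen cacRel).symm (ConGen.Rel.of _ _ ⟨rfl, rfl⟩)
  induction n with
  | zero => exact hcbc
  | succ n ih =>
    obtain ⟨w, hw⟩ := exists_cacWord_eq_two_mul n
    have hswap : freeSwap (cacWord (n + 1)) = of 2 * of 1 * freeSwap (cacWord n) := by
      rw [cacWord, map_mul, map_mul]; rfl
    rw [hswap]
    refine (conGen cacRel).trans ((conGen cacRel).mul ((conGen cacRel).refl _) ih) ?_
    rw [cacWord, hw, ← mul_assoc, ← mul_assoc]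
    exact (conGen cacRel).mul hcbc ((conGen cacRel).refl w)

theorem swap_cacWord (n : ℕ) : swap (cacWord n) = (cacWord n : cacSemigroup) :=
  (Con.eq _).2 (conGen_freeSwap_cacWord n)

theorem length_cacWord (n : ℕ) : (cacWord n).length = 2 * n + 3 := by
  induction n with
  | zero => rfl
  | succ n ih =>
    rw [cacWord, length_mul, length_mul, ih]
    show 1 + 1 + (2 * n + 3) = 2 * (n + 1) + 3
    omega

theorem injective_cacWord : Function.Injective fun n => (cacWord n : cacSemigroup) := by
  intro n m h
  have := congrArg FreeSemigroup.length (cMask_eq_of_rel ((Con.eq _).1 h))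
  simp only [cMask, length_map, length_cacWord] at this
  omega

theorem head_cMask_cacWord (n : ℕ) : (cMask (cacWord n)).head = true := by
  cases n <;> rw [cacWord, map_mul, map_mul, head_mul, head_mul] <;> rfl

theorem isChain_cMask_cacWord (n : ℕ) : (cMask (cacWord n)).toList.IsChain (· ≠ ·) := by
  induction n with
  | zero => decide
  | succ n ih =>
    have : (cMask (cacWord (n + 1))).toList = true :: false :: (cMask (cacWord n)).toList := by
      rw [cacWord, map_mul, map_mul, toList_mul, toList_mul]; rfl
    have hhead : (cMask (cacWord n)).toList = true :: (cMask (cacWord n)).tail := by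
      rw [← head_cMask_cacWord n]; rfl
    rw [this, List.isChain_cons_cons, hhead, List.isChain_cons_cons, ← hhead]
    exact ⟨by decide, by decide, ih⟩

theorem mul_ne_cacWord_of_swap_eq {x y : cacSemigroup} (hx : swap x = x) (hy : swap y = y)
    (n : ℕ) : x * y ≠ cacWord n := by
  induction x, y using Con.induction_on₂ with | H u v => ?_
  intro h
  have hchain := isChain_cMask_cacWord n
  rw [← cMask_eq_of_rel ((Con.eq _).1 h), map_mul] at hchain
  have hne := rel_last_head_of_isChain_toList_mul hchain
  simp [cMask, last_eq_two_of_swap_eq hx, head_eq_two_of_swap_eq hy] at hne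

theorem not_exists_finset_closure_eq_fixedPoints :
    ¬ ∃ B : Finset cacSemigroup,
      (Subsemigroup.closure (B : Set cacSemigroup) : Set cacSemigroup) = {x | swap x = x} := by
  rintro ⟨B, hB⟩
  have hmem (n : ℕ) : (cacWord n : cacSemigroup) ∈ (B : Set cacSemigroup) :=
    Subsemigroup.mem_of_coe_closure_eq hB (swap_cacWord n)
      fun y hy z hz => mul_ne_cacWord_of_swap_eq hy hz n
  exact Set.infinite_of_injective_forall_mem injective_cacWord hmem B.finite_toSet

end cacSemigroup

/-- in the semigroup `S = ⟨a, b, c | cac = cbc⟩` there is a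
(well-defined) endomorphism `φ` with `a ↦ b`, `b ↦ a`, `c ↦ c`; it satisfies
`φ ∘ φ = id` (hence is an automorphism); the elements `cac, (ca)²c, (ca)³c, …`
are pairwise distinct fixed points of `φ`; and `Fix(φ)` is not finitely
generated as a subsemigroup. In particular `S ∉ UA`: no `N` bounds the rank of
`Fix(ψ)` over all automorphisms `ψ` of `S`. -/
theorem stmt_17 :
    (∃ φ : cacSemigroup →ₙ* cacSemigroup,
      φ ((conGen cacRel).toQuotient (FreeSemigroup.of 0)) =
        (conGen cacRel).toQuotient (FreeSemigroup.of 1) ∧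
      φ ((conGen cacRel).toQuotient (FreeSemigroup.of 1)) =
        (conGen cacRel).toQuotient (FreeSemigroup.of 0) ∧
      φ ((conGen cacRel).toQuotient (FreeSemigroup.of 2)) =
        (conGen cacRel).toQuotient (FreeSemigroup.of 2) ∧
      (∀ x : cacSemigroup, φ (φ x) = x) ∧
      (∀ n : ℕ, φ ((conGen cacRel).toQuotient (cacWord n)) =
        (conGen cacRel).toQuotient (cacWord n)) ∧
      (Function.Injective fun n : ℕ => (conGen cacRel).toQuotient (cacWord n)) ∧
      ¬ ∃ B : Finset cacSemigroup,
        (Subsemigroup.closure (B : Set cacSemigroup) : Set cacSemigroup) =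
          {x : cacSemigroup | φ x = x}) ∧
    ¬ ∃ N : ℕ, ∀ ψ : cacSemigroup →ₙ* cacSemigroup, Function.Bijective ψ →
      ∃ B : Finset cacSemigroup, B.card ≤ N ∧
        (Subsemigroup.closure (B : Set cacSemigroup) : Set cacSemigroup) =
          {x : cacSemigroup | ψ x = x} := by
  have hfg := cacSemigroup.not_exists_finset_closure_eq_fixedPoints
  refine ⟨⟨cacSemigroup.swap, rfl, rfl, rfl, cacSemigroup.swap_swap, cacSemigroup.swap_cacWord,
    cacSemigroup.injective_cacWord, hfg⟩, ?_⟩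
  rintro ⟨N, hN⟩
  obtain ⟨B, -, hB⟩ :=
    hN cacSemigroup.swap (Function.Involutive.bijective cacSemigroup.swap_swap)
  exact hfg ⟨B, hB⟩
end
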